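/- arXiv:2212.02368 — 13 statements merged into one kernel-verified Lean document; each statement's English description precedes it below -/
import Mathlib

section
/- Let X be a finite set of row vectors in ℝⁿ and let Q be an n×n real symmetric positive definite matrix with A Q Aᵀ = 1 for every A ∈ X. Suppose Q is a critical point of the determinant on the slice W_X, in the sense that tr(Q⁻¹ S) = 0 for every real symmetric n×n matrix S satisfying A S Aᵀ = 0 for all A ∈ X. Then (1/n)·Q⁻¹ lies in the linear span of {AᵀA : A ∈ X}, and moreover tr((1/n)·Q⁻¹ · M) = 1 for every symmetric matrix M with A M Aᵀ = 1 for all A ∈ X. -/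
/-!
Under the trace pairing `⟨G, S⟩ = tr(G S)`, the directions tangent to `W_X` are exactly the common
kernel of the functionals `S ↦ tr(AᵀA S) = A S Aᵀ`. Criticality says that `S ↦ tr(Q⁻¹ S)` also
vanishes there, so by finite-dimensional duality it is a combination of these functionals, and
since the trace pairing is nondegenerate, `Q⁻¹` lies in the span of the `AᵀA`. For any `M` with
`A M Aᵀ = 1` on `X`, `M - Q` is itself tangent, whence `tr(Q⁻¹ M) = tr(Q⁻¹ Q) = n`.
-/

open Matrix

namespace Matrix

variable {n K : Type*} [Fintype n]

theorem trace_vecMulVec_self_mul [CommSemiring K] (a : n → K) (S : Matrix n n K) :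
    (vecMulVec a a * S).trace = a ⬝ᵥ (S *ᵥ a) := by
  rw [vecMulVec_mul, trace_vecMulVec, dotProduct_mulVec, dotProduct_comm]

theorem IsSymm.trace_mul_add_transpose [CommSemiring K] {G : Matrix n n K} (hG : G.IsSymm)
    (S : Matrix n n K) : (G * (S + Sᵀ)).trace = 2 * (G * S).trace := by
  have : (G * Sᵀ).trace = (G * S).trace := by
    rw [← trace_transpose, transpose_mul, transpose_transpose, hG.eq, trace_mul_comm]
  rw [mul_add, trace_add, this, two_mul]

theorem mem_span_of_forall_trace_mul_eq_zero [Field K] {s : Set (Matrix n n K)} (hs : s.Finite)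
    {T : Matrix n n K} (h : ∀ S, (∀ G ∈ s, (G * S).trace = 0) → (T * S).trace = 0) :
    T ∈ Submodule.span K s := by
  have : Finite s := hs
  let φ : Matrix n n K →ₗ[K] Module.Dual K (Matrix n n K) :=
    (LinearMap.mul K (Matrix n n K)).compr₂ (traceLinearMap n K K)
  have hφ : Function.Injective φ := fun A B hAB =>
    ext_iff_trace_mul_right.2 fun S => LinearMap.congr_fun hAB S
  have hker : ⨅ G : s, LinearMap.ker (φ G) ≤ LinearMap.ker (φ T) := fun S hS =>
    h S fun G hG => (Submodule.mem_iInf _).1 hS ⟨G, hG⟩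
  have hφT := mem_span_of_iInf_ker_le_ker hker
  rw [Set.range_comp', Subtype.range_coe, ← Submodule.map_span] at hφT
  obtain ⟨T', hT', hT'T⟩ := hφT
  rwa [← hφ hT'T]

theorem mem_span_of_forall_isSymm_trace_mul_eq_zero [Field K] [NeZero (2 : K)]
    {s : Set (Matrix n n K)} (hs : s.Finite) (hsymm : ∀ G ∈ s, G.IsSymm) {T : Matrix n n K}
    (hT : T.IsSymm)
    (h : ∀ S, S.IsSymm → (∀ G ∈ s, (G * S).trace = 0) → (T * S).trace = 0) :
    T ∈ Submodule.span K s := by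
  -- `T` and every `G ∈ s` pair with `S` as with its symmetrization `S + Sᵀ` (up to the factor 2).
  refine mem_span_of_forall_trace_mul_eq_zero hs fun S hS => ?_
  have hsum := h (S + Sᵀ) (isSymm_add_transpose_self S) fun G hG => by
    rw [(hsymm G hG).trace_mul_add_transpose, hS G hG, mul_zero]
  rw [hT.trace_mul_add_transpose] at hsum
  exact (mul_eq_zero.1 hsum).resolve_left two_ne_zero

end Matrix

/-- If `Q` is a critical point of the determinant restricted on `W_X` (the set of
symmetric positive definite matrices `M` with `A M Aᵀ = 1` for all `A ∈ X`), then
`(1/n) Q⁻¹` lies in the span of the rank-one matrices `AᵀA`, `A ∈ X`, and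
`tr((1/n) Q⁻¹ M) = 1` for every symmetric `M` with `A M Aᵀ = 1` for all `A ∈ X`. -/
theorem stmt2 (n : ℕ) (hn : 0 < n) (X : Finset (Fin n → ℝ))
    (Q : Matrix (Fin n) (Fin n) ℝ) (hQsymm : Q.IsSymm) (hQpd : Q.PosDef)
    (hQX : ∀ A ∈ X, dotProduct A (Q.mulVec A) = 1)
    (hcrit : ∀ S : Matrix (Fin n) (Fin n) ℝ, S.IsSymm →
      (∀ A ∈ X, dotProduct A (S.mulVec A) = 0) → (Q⁻¹ * S).trace = 0) :
    (1 / (n : ℝ)) • Q⁻¹ ∈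
      Submodule.span ℝ ((fun A : Fin n → ℝ => Matrix.vecMulVec A A) '' (X : Set (Fin n → ℝ))) ∧
    ∀ M : Matrix (Fin n) (Fin n) ℝ, M.IsSymm →
      (∀ A ∈ X, dotProduct A (M.mulVec A) = 1) →
      (((1 / (n : ℝ)) • Q⁻¹) * M).trace = 1 := by
  have hQinv : Q⁻¹.IsSymm := by rw [IsSymm, transpose_nonsing_inv, hQsymm.eq]
  refine ⟨Submodule.smul_mem _ _ ?_, fun M hM hMX => ?_⟩
  · refine mem_span_of_forall_isSymm_trace_mul_eq_zero (X.finite_toSet.image _) ?_ hQinv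
      fun S hS hSX => hcrit S hS fun A hA => ?_
    · rintro _ ⟨A, -, rfl⟩
      exact transpose_vecMulVec A A
    · rw [← trace_vecMulVec_self_mul]
      exact hSX _ ⟨A, hA, rfl⟩
  · have hMQ : (Q⁻¹ * (M - Q)).trace = 0 := hcrit _ (hM.sub hQsymm) fun A hA => by
      rw [sub_mulVec, dotProduct_sub, hMX A hA, hQX A hA, sub_self]
    rw [mul_sub, trace_sub, nonsing_inv_mul Q (isUnit_iff_ne_zero.2 hQpd.det_pos.ne'), trace_one,
      Fintype.card_fin, sub_eq_zero] at hMQ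
    rw [smul_mul, trace_smul, hMQ, smul_eq_mul, one_div_mul_cancel (Nat.cast_ne_zero.2 hn.ne')]
end

section
/- Let A₁, …, A_k be row vectors in ℝⁿ, let y₁, …, y_k be real numbers with y_j > 0 for all j and y₁ + ⋯ + y_k = 1, and suppose the matrix P = Σ_{j=1}^{k} y_j A_jᵀA_j is positive definite. If for each j with 2 ≤ j ≤ k the derivative at t = 0 of t ↦ det(P + t(A_jᵀA_j − A₁ᵀA₁)) vanishes, then A_j P⁻¹ A_jᵀ = n for every j = 1, …, k. -/
open Matrix Polynomial

/-
Differentiating `t ↦ det (P + t • M) = det P * det (1 + t • P⁻¹ M)` at `0` gives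
`det P * tr (P⁻¹ M)`, so criticality of the determinant along `AⱼᵀAⱼ − A₁ᵀA₁` says that all the
numbers `tr (P⁻¹ AⱼᵀAⱼ) = Aⱼ P⁻¹ Aⱼᵀ` are equal. Their `y`-weighted average is
`tr (P⁻¹ P) = n`, so each of them is `n`.
-/

section Derivative

variable {𝕜 ι : Type*} [NontriviallyNormedField 𝕜] [Fintype ι] [DecidableEq ι]

theorem Matrix.hasDerivAt_det_one_add_smul (N : Matrix ι ι 𝕜) :
    HasDerivAt (fun t : 𝕜 => det (1 + t • N)) (trace N) 0 := by
  have hpoly : (fun t : 𝕜 => det (1 + t • N)) =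
      fun t => (det (1 + (X : 𝕜[X]) • N.map C)).eval t := by
    funext t
    simp [eval_det, ← smul_eq_mul_diagonal]
  rw [hpoly, ← derivative_det_one_add_X_smul]
  exact Polynomial.hasDerivAt _ 0

theorem Matrix.hasDerivAt_det_add_smul {P : Matrix ι ι 𝕜} (hP : IsUnit P.det)
    (M : Matrix ι ι 𝕜) :
    HasDerivAt (fun t : 𝕜 => det (P + t • M)) (det P * trace (P⁻¹ * M)) 0 := by
  have hfactor : (fun t : 𝕜 => det (P + t • M)) = fun t => det P * det (1 + t • (P⁻¹ * M)) := by
    funext t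
    rw [← det_mul, Matrix.mul_add, mul_one, Matrix.mul_smul, ← Matrix.mul_assoc,
      mul_nonsing_inv _ hP, Matrix.one_mul]
  rw [hfactor]
  exact (hasDerivAt_det_one_add_smul _).const_mul _

theorem Matrix.trace_inv_mul_eq_of_deriv_det_eq_zero {P : Matrix ι ι 𝕜} (hP : IsUnit P.det)
    {M N : Matrix ι ι 𝕜} (hcrit : deriv (fun t : 𝕜 => det (P + t • (M - N))) 0 = 0) :
    trace (P⁻¹ * M) = trace (P⁻¹ * N) := by
  rw [(hasDerivAt_det_add_smul hP _).deriv, Matrix.mul_sub, trace_sub] at hcrit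
  exact sub_eq_zero.mp ((mul_eq_zero.mp hcrit).resolve_left hP.ne_zero)

end Derivative

theorem Matrix.trace_mul_vecMulVec {R ι : Type*} [CommSemiring R] [Fintype ι]
    (X : Matrix ι ι R) (u v : ι → R) : trace (X * vecMulVec u v) = v ⬝ᵥ X *ᵥ u := by
  rw [mul_vecMulVec, trace_vecMulVec, dotProduct_comm]

theorem Matrix.trace_inv_mul_eq_card {R ι κ : Type*} [CommRing R] [Fintype ι] [DecidableEq ι]
    [Fintype κ] {P : Matrix ι ι R} (hP : IsUnit P.det) {M : κ → Matrix ι ι R} {y : κ → R}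
    (hPM : P = ∑ l, y l • M l) (hy : ∑ l, y l = 1) {c : R} (hc : ∀ l, trace (P⁻¹ * M l) = c) :
    c = Fintype.card ι :=
  calc c = ∑ l, y l * trace (P⁻¹ * M l) := by simp only [hc, ← Finset.sum_mul, hy, one_mul]
    _ = trace (P⁻¹ * P) := by
      simp only [hPM, Finset.mul_sum, Matrix.mul_smul, trace_sum, trace_smul, smul_eq_mul]
    _ = Fintype.card ι := by rw [nonsing_inv_mul _ hP, trace_one]

theorem stmt3_general (n k : ℕ) (hk : 0 < k) (A : Fin k → (Fin n → ℝ)) (y : Fin k → ℝ)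
    (hsum : ∑ j, y j = 1)
    (hP : (∑ j, y j • Matrix.vecMulVec (A j) (A j)).PosDef)
    (hcrit : ∀ j : Fin k, j ≠ ⟨0, hk⟩ →
      deriv (fun t : ℝ =>
        ((∑ l, y l • Matrix.vecMulVec (A l) (A l)) +
          t • (Matrix.vecMulVec (A j) (A j) -
            Matrix.vecMulVec (A ⟨0, hk⟩) (A ⟨0, hk⟩))).det) 0 = 0) :
    ∀ j, dotProduct (A j)
      ((∑ l, y l • Matrix.vecMulVec (A l) (A l))⁻¹.mulVec (A j)) = (n : ℝ) := by
  intro j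
  set P := ∑ l, y l • vecMulVec (A l) (A l)
  have hdet : IsUnit P.det := hP.isUnit.map detMonoidHom
  have htrace_eq : ∀ l, trace (P⁻¹ * vecMulVec (A l) (A l)) =
      trace (P⁻¹ * vecMulVec (A ⟨0, hk⟩) (A ⟨0, hk⟩)) := by
    intro l
    by_cases hl : l = ⟨0, hk⟩
    · rw [hl]
    · exact trace_inv_mul_eq_of_deriv_det_eq_zero hdet (hcrit l hl)
  have hcard := trace_inv_mul_eq_card hdet rfl hsum htrace_eq
  rw [← trace_mul_vecMulVec, htrace_eq, hcard, Fintype.card_fin]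

/-- Variational characterization of interior critical points of the determinant on the
convex hull of the rank-one matrices `AⱼᵀAⱼ`: if `P = Σ yⱼ AⱼᵀAⱼ` with all `yⱼ > 0`,
`Σ yⱼ = 1`, `P` positive definite, and the derivative at `t = 0` of
`t ↦ det (P + t (AⱼᵀAⱼ − A₁ᵀA₁))` vanishes for every `j ≥ 2`, then
`Aⱼ P⁻¹ Aⱼᵀ = n` for every `j`. -/
theorem stmt3 (n k : ℕ) (hk : 0 < k) (A : Fin k → (Fin n → ℝ)) (y : Fin k → ℝ)
    (hy : ∀ j, 0 < y j) (hsum : ∑ j, y j = 1)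
    (hP : (∑ j, y j • Matrix.vecMulVec (A j) (A j)).PosDef)
    (hcrit : ∀ j : Fin k, j ≠ ⟨0, hk⟩ →
      deriv (fun t : ℝ =>
        ((∑ l, y l • Matrix.vecMulVec (A l) (A l)) +
          t • (Matrix.vecMulVec (A j) (A j) -
            Matrix.vecMulVec (A ⟨0, hk⟩) (A ⟨0, hk⟩))).det) 0 = 0) :
    ∀ j, dotProduct (A j)
      ((∑ l, y l • Matrix.vecMulVec (A l) (A l))⁻¹.mulVec (A j)) = (n : ℝ) :=
  stmt3_general n k hk A y hsum hP hcrit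
end

section
/- Let n ≥ 3 and let Λ ⊆ ℝⁿ be a lattice of rank n, normalized so that its shortest nonzero vectors have norm 1, such that Ξ(Λ) contains n vectors generating Λ over ℤ and Λ is s-irreducible. Then there exist an integer k ≥ 4 and k vectors of Ξ(Λ) forming a generic k-tuple. -/
/-!
Call a minimal linearly dependent finite set of vectors a circuit; a circuit with `k` elements,
listed injectively, is a generic `k`-tuple. So suppose every circuit inside the set `Ξ` of
shortest vectors has at most three elements. Two such circuits whose spans meet nontrivially
then span at most a plane: otherwise they span two planes meeting in a line, and two vectors off
that line from each of them form a circuit with four elements. Hence a subspace `W` of dimension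
at most two, spanned by shortest vectors and containing a given one, contains every circuit of
`Ξ` that meets it (`W` is the plane of a circuit through that vector if there is one, else its
line). A circuit inside the union of a basis of `Ξ ∩ W` and a basis of `Ξ \ W` lies on one
side, so the union is independent and `W` meets the span of `Ξ \ W` trivially. A complement of
`W` containing `Ξ \ W` is nonzero because `dim W ≤ 2 < n`, and s-irreducibility fails.
-/

/-- A family of `k` vectors in `ℝⁿ` is a generic `k`-tuple if it has rank `k − 1`
and any `k − 1` of its vectors are linearly independent. -/
def GenericTuple {n k : ℕ} (w : Fin k → EuclideanSpace ℝ (Fin n)) : Prop :=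
  Module.finrank ℝ (Submodule.span ℝ (Set.range w)) = k - 1 ∧
  ∀ i : Fin k, LinearIndependent ℝ fun j : {j : Fin k // j ≠ i} => w j.1

open Submodule Module Set

section LinearCircuit

variable (K : Type*) {V : Type*} [DivisionRing K] [AddCommGroup V] [Module K V]

def IsLinearCircuit (C : Finset V) : Prop :=
  Minimal (fun D : Finset V => ¬ LinearIndepOn K id (D : Set V)) C

variable {K}

theorem exists_isLinearCircuit_subset {D : Finset V} (hD : ¬ LinearIndepOn K id (D : Set V)) :
    ∃ C ⊆ D, IsLinearCircuit K C :=
  exists_minimal_le_of_wellFoundedLT _ D hD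

theorem linearIndepOn_id_iff_forall_not_isLinearCircuit {s : Set V} :
    LinearIndepOn K id s ↔ ∀ C : Finset V, (C : Set V) ⊆ s → ¬ IsLinearCircuit K C := by
  refine ⟨fun hs C hCs hC => hC.prop (hs.mono hCs), fun h => ?_⟩
  refine linearIndepOn_iff_linearIndepOn_finset.mpr fun D hDs => by_contra fun hD => ?_
  obtain ⟨C, hCD, hC⟩ := exists_isLinearCircuit_subset hD
  exact h C ((Finset.coe_subset.mpr hCD).trans hDs) hC

namespace IsLinearCircuit

variable {C : Finset V}

theorem linearIndepOn_of_ssubset (hC : IsLinearCircuit K C) {D : Finset V} (hDC : D ⊂ C) :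
    LinearIndepOn K id (D : Set V) :=
  not_not.mp (hC.not_prop_of_lt hDC)

theorem nonempty (hC : IsLinearCircuit K C) : C.Nonempty :=
  Finset.nonempty_iff_ne_empty.mpr <| by rintro rfl; exact hC.prop (by simp)

theorem mem_span_erase [DecidableEq V] (hC : IsLinearCircuit K C) {c : V} (hc : c ∈ C) :
    c ∈ span K (C.erase c : Set V) := by
  by_contra hspan
  apply hC.prop
  rw [← Finset.insert_erase hc, Finset.coe_insert]
  exact (linearIndepOn_id_insert (by simp)).mpr
    ⟨hC.linearIndepOn_of_ssubset (Finset.erase_ssubset hc), hspan⟩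

theorem span_erase [DecidableEq V] (hC : IsLinearCircuit K C) {c : V} (hc : c ∈ C) :
    span K (C.erase c : Set V) = span K (C : Set V) := by
  conv_rhs => rw [← Finset.insert_erase hc, Finset.coe_insert]
  exact (span_insert_eq_span (hC.mem_span_erase hc)).symm

theorem finrank_span (hC : IsLinearCircuit K C) :
    finrank K (span K (C : Set V)) = C.card - 1 := by
  classical
  obtain ⟨c, hc⟩ := hC.nonempty
  rw [← hC.span_erase hc,
    finrank_span_finset_eq_card (hC.linearIndepOn_of_ssubset (Finset.erase_ssubset hc)),
    Finset.card_erase_of_mem hc]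

theorem linearIndepOn_pair (hC : IsLinearCircuit K C) (h3 : 2 < C.card) {q r : V}
    (hq : q ∈ C) (hr : r ∈ C) : LinearIndepOn K id ({q, r} : Set V) := by
  classical
  have hpair : ({q, r} : Finset V) ⊂ C :=
    Finset.ssubset_iff_subset_ne.mpr ⟨by simp [Finset.insert_subset_iff, hq, hr], by
      rintro rfl; have := Finset.card_le_two (a := q) (b := r); omega⟩
  simpa using hC.linearIndepOn_of_ssubset hpair

theorem span_pair_eq (hC : IsLinearCircuit K C) (h3 : C.card = 3) {q r : V}
    (hq : q ∈ C) (hr : r ∈ C) (hqr : q ≠ r) : span K {q, r} = span K (C : Set V) := by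
  classical
  refine eq_of_le_of_finrank_le (span_le.mpr ?_) ?_
  · simpa [insert_subset_iff] using ⟨subset_span hq, subset_span hr⟩
  · rw [hC.finrank_span, h3, finrank_span_set_eq_card (hC.linearIndepOn_pair (by omega) hq hr)]
    simp [hqr]

variable [FiniteDimensional K V]

theorem exists_pair_notMem (hC : IsLinearCircuit K C) (X : Submodule K V)
    (hX : finrank K X + 1 < C.card) :
    ∃ q ∈ C, ∃ r ∈ C, q ≠ r ∧ q ∉ X ∧ r ∉ X := by
  classical
  have hssub : C.filter (· ∈ X) ⊂ C := by
    refine (Finset.filter_subset _ _).ssubset_of_ne fun heq => ?_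
    have hle : span K (C : Set V) ≤ X := span_le.mpr fun x hx => by
      rw [← heq] at hx; exact (Finset.mem_filter.mp hx).2
    have := Submodule.finrank_mono hle
    rw [hC.finrank_span] at this
    omega
  have hin : (C.filter (· ∈ X)).card ≤ finrank K X := by
    rw [← finrank_span_finset_eq_card (hC.linearIndepOn_of_ssubset hssub)]
    exact Submodule.finrank_mono (span_le.mpr fun x hx => (Finset.mem_filter.mp hx).2)
  have hout : 1 < (C.filter (· ∉ X)).card := by
    have := Finset.card_filter_add_card_filter_not (s := C) (· ∈ X)
    omega
  obtain ⟨q, hq, r, hr, hqr⟩ := Finset.one_lt_card.mp hout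
  rw [Finset.mem_filter] at hq hr
  exact ⟨q, hq.1, r, hr.1, hqr, hq.2, hr.2⟩

end IsLinearCircuit

theorem isLinearCircuit_of_pairs [DecidableEq V] {q r s t : V}
    (hqr : LinearIndepOn K id ({q, r} : Set V)) (hst : LinearIndepOn K id ({s, t} : Set V))
    (hqr' : q ≠ r) (hst' : s ≠ t)
    (hs : s ∉ span K {q, r}) (ht : t ∉ span K {q, r})
    (hq : q ∉ span K {s, t}) (hr : r ∉ span K {s, t})
    (hrank : finrank K ↥(span K {q, r} ⊔ span K {s, t}) < 4) :
    IsLinearCircuit K ({q, r, s, t} : Finset V) ∧ ({q, r, s, t} : Finset V).card = 4 := by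
  have hsq : s ≠ q := fun h => hs (h ▸ subset_span (by simp))
  have hsr : s ≠ r := fun h => hs (h ▸ subset_span (by simp))
  have htq : t ≠ q := fun h => ht (h ▸ subset_span (by simp))
  have htr : t ≠ r := fun h => ht (h ▸ subset_span (by simp))
  have hcard : ({q, r, s, t} : Finset V).card = 4 := by
    simp [Finset.card_insert_of_notMem, *, hsq.symm, hsr.symm, htq.symm, htr.symm]
  have hcoe : (({q, r, s, t} : Finset V) : Set V) = {q, r} ∪ {s, t} := by
    simp only [Finset.coe_insert, Finset.coe_singleton, insert_union, singleton_union]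
  have h₁ := (linearIndepOn_id_insert (by simp [hsq, hsr])).mpr ⟨hqr, hs⟩
  have h₂ := (linearIndepOn_id_insert (by simp [htq, htr])).mpr ⟨hqr, ht⟩
  have h₃ := (linearIndepOn_id_insert (by simp [hsq.symm, htq.symm])).mpr ⟨hst, hq⟩
  have h₄ := (linearIndepOn_id_insert (by simp [hsr.symm, htr.symm])).mpr ⟨hst, hr⟩
  refine ⟨⟨fun hind => ?_, fun D hD hDC => ?_⟩, hcard⟩
  · have := finrank_span_finset_eq_card hind
    rw [hcoe, span_union, hcard] at this
    omega
  · by_contra hCD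
    obtain ⟨c, hc, hDc⟩ := Finset.ssubset_iff_exists_subset_erase.mp (lt_of_le_not_ge hDC hCD)
    refine hD (LinearIndepOn.mono ?_ (Finset.coe_subset.mpr hDc))
    simp only [Finset.mem_insert, Finset.mem_singleton] at hc
    rcases hc with rfl | rfl | rfl | rfl
    · exact h₄.mono fun x hx => by simp at hx ⊢; tauto
    · exact h₃.mono fun x hx => by simp at hx ⊢; tauto
    · exact h₂.mono fun x hx => by simp at hx ⊢; tauto
    · exact h₁.mono fun x hx => by simp at hx ⊢; tauto

theorem disjoint_span_inter_diff_of_isLinearCircuit {S : Set V} {W : Submodule K V}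
    (hclosed : ∀ C : Finset V, (C : Set V) ⊆ S → IsLinearCircuit K C →
      ∀ x ∈ C, x ∈ W → (C : Set V) ⊆ W) :
    Disjoint (span K (S ∩ W)) (span K (S \ W)) := by
  obtain ⟨B₁, hB₁, hspan₁, hind₁ : LinearIndepOn K id B₁⟩ := exists_linearIndependent K (S ∩ W)
  obtain ⟨B₂, hB₂, hspan₂, hind₂ : LinearIndepOn K id B₂⟩ := exists_linearIndependent K (S \ W)
  have hdisj : Disjoint B₁ B₂ :=
    Set.disjoint_of_subset hB₁ hB₂ (disjoint_sdiff_inter.symm)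
  have hind : LinearIndepOn K id (B₁ ∪ B₂) := by
    rw [linearIndepOn_id_iff_forall_not_isLinearCircuit]
    intro C hC hcirc
    by_cases hmeet : ∃ x ∈ C, x ∈ W
    · obtain ⟨x, hxC, hxW⟩ := hmeet
      have hCS : (C : Set V) ⊆ S :=
        hC.trans (union_subset (hB₁.trans inter_subset_left) (hB₂.trans sdiff_subset))
      have hCW := hclosed C hCS hcirc x hxC hxW
      exact hcirc.prop (hind₁.mono fun y hy => (hC hy).resolve_right fun h => (hB₂ h).2 (hCW hy))
    · push Not at hmeet
      exact hcirc.prop (hind₂.mono fun y hy => (hC hy).resolve_left fun h => hmeet y hy (hB₁ h).2)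
  rw [← hspan₁, ← hspan₂]
  exact ((linearIndepOn_id_union_iff hdisj).mp hind).2.2

section SmallCircuits

variable [FiniteDimensional K V] {S : Set V}

theorem finrank_sup_span_le_two_of_not_disjoint
    (hS : ∀ C : Finset V, (C : Set V) ⊆ S → IsLinearCircuit K C → C.card ≤ 3)
    {C C' : Finset V} (hCS : (C : Set V) ⊆ S) (hC'S : (C' : Set V) ⊆ S)
    (hC : IsLinearCircuit K C) (hC' : IsLinearCircuit K C')
    (hCC' : ¬ Disjoint (span K (C : Set V)) (span K (C' : Set V))) :
    finrank K ↥(span K (C : Set V) ⊔ span K (C' : Set V)) ≤ 2 := by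
  classical
  set U := span K (C : Set V)
  set U' := span K (C' : Set V)
  have hU : finrank K U = C.card - 1 := hC.finrank_span
  have hU' : finrank K U' = C'.card - 1 := hC'.finrank_span
  have hC3 := hS C hCS hC
  have hC'3 := hS C' hC'S hC'
  have hinf : finrank K ↥(U ⊓ U') ≠ 0 := by
    rwa [Ne, Submodule.finrank_eq_zero, ← disjoint_iff]
  have hsum := Submodule.finrank_sup_add_finrank_inf_eq U U'
  by_contra! hbig : 2 < finrank K ↥(U ⊔ U')
  obtain ⟨q, hq, r, hr, hqr, hqX, hrX⟩ := hC.exists_pair_notMem (U ⊓ U') (by omega)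
  obtain ⟨s, hs, t, ht, hst, hsX, htX⟩ := hC'.exists_pair_notMem (U ⊓ U') (by omega)
  have hqr_span := hC.span_pair_eq (by omega) hq hr hqr
  have hst_span := hC'.span_pair_eq (by omega) hs ht hst
  obtain ⟨hcirc, hcard⟩ := isLinearCircuit_of_pairs (hC.linearIndepOn_pair (by omega) hq hr)
    (hC'.linearIndepOn_pair (by omega) hs ht) hqr hst
    (hqr_span ▸ fun h => hsX ⟨h, subset_span hs⟩) (hqr_span ▸ fun h => htX ⟨h, subset_span ht⟩)
    (hst_span ▸ fun h => hqX ⟨subset_span hq, h⟩) (hst_span ▸ fun h => hrX ⟨subset_span hr, h⟩)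
    (by rw [hqr_span, hst_span]; change finrank K ↥(U ⊔ U') < 4; omega)
  have := hS _ (by simp [insert_subset_iff, hCS hq, hCS hr, hC'S hs, hC'S ht]) hcirc
  omega

theorem exists_span_closed_of_forall_isLinearCircuit_card_le_three (hS0 : 0 ∉ S)
    (hS : ∀ C : Finset V, (C : Set V) ⊆ S → IsLinearCircuit K C → C.card ≤ 3)
    {s₀ : V} (hs₀ : s₀ ∈ S) :
    ∃ T ⊆ S, s₀ ∈ span K T ∧ finrank K (span K T) ≤ 2 ∧
      ∀ C : Finset V, (C : Set V) ⊆ S → IsLinearCircuit K C →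
        ∀ x ∈ C, x ∈ span K T → (C : Set V) ⊆ span K T := by
  have hne : ∀ {x}, x ∈ S → x ≠ 0 := fun hx h => hS0 (h ▸ hx)
  by_cases hplane : ∃ C₀ : Finset V, (C₀ : Set V) ⊆ S ∧ IsLinearCircuit K C₀ ∧
      s₀ ∈ span K (C₀ : Set V) ∧ finrank K (span K (C₀ : Set V)) = 2
  · obtain ⟨C₀, hC₀S, hC₀, hs₀C₀, h2⟩ := hplane
    refine ⟨C₀, hC₀S, hs₀C₀, h2.le, fun C hCS hC x hxC hxC₀ => ?_⟩
    have hmeet : ¬ Disjoint (span K (C : Set V)) (span K (C₀ : Set V)) := fun h =>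
      hne (hCS hxC) (disjoint_def.mp h x (subset_span hxC) hxC₀)
    have hle := finrank_sup_span_le_two_of_not_disjoint hS hCS hC₀S hC hC₀ hmeet
    have heq : span K (C₀ : Set V) = span K (C : Set V) ⊔ span K (C₀ : Set V) :=
      eq_of_le_of_finrank_le le_sup_right (by omega)
    exact fun y hy => heq ▸ mem_sup_left (subset_span hy)
  · push Not at hplane
    refine ⟨{s₀}, singleton_subset_iff.mpr hs₀, mem_span_singleton_self s₀,
      (finrank_span_le_card _).trans (by simp), fun C hCS hC x hxC hxs₀ => ?_⟩
    obtain ⟨a, rfl⟩ := mem_span_singleton.mp hxs₀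
    have ha : a ≠ 0 := by rintro rfl; exact hne (hCS hxC) (zero_smul K s₀)
    have hs₀C : s₀ ∈ span K (C : Set V) := by
      rw [← span_singleton_le_iff_mem, ← span_singleton_smul_eq (Ne.isUnit ha)]
      exact span_singleton_le_iff_mem _ _ |>.mpr (subset_span hxC)
    have hC1 : finrank K (span K (C : Set V)) ≤ 1 := by
      have := hS C hCS hC
      have := hplane C hCS hC hs₀C
      rw [hC.finrank_span] at *
      omega
    have heq := eq_of_le_of_finrank_le ((span_singleton_le_iff_mem _ _).mpr hs₀C)
      (hC1.trans (by rw [finrank_span_singleton (hne hs₀)]))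
    exact fun y hy => heq ▸ subset_span hy

theorem exists_isCompl_of_forall_isLinearCircuit_card_le_three
    (hV : 3 ≤ finrank K V) (hS0 : 0 ∉ S)
    (hS : ∀ C : Finset V, (C : Set V) ⊆ S → IsLinearCircuit K C → C.card ≤ 3)
    {s₀ : V} (hs₀ : s₀ ∈ S) :
    ∃ V₁ V₂ : Submodule K V, V₁ ≠ ⊥ ∧ V₂ ≠ ⊥ ∧ IsCompl V₁ V₂ ∧ ∀ x ∈ S, x ∈ V₁ ∨ x ∈ V₂ := by
  obtain ⟨T, hTS, hs₀T, hT2, hclosed⟩ :=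
    exists_span_closed_of_forall_isLinearCircuit_card_le_three hS0 hS hs₀
  set W := span K T
  have hW : span K (S ∩ W) = W :=
    le_antisymm (span_le.mpr inter_subset_right) (span_mono (subset_inter hTS subset_span))
  have hdisj := disjoint_span_inter_diff_of_isLinearCircuit hclosed
  rw [hW] at hdisj
  obtain ⟨V₂, hV₂, hcompl⟩ := hdisj.symm.exists_isCompl
  refine ⟨W, V₂, (Submodule.ne_bot_iff W).mpr ⟨s₀, hs₀T, fun h => hS0 (h ▸ hs₀)⟩, ?_,
    hcompl.symm, fun x hx => ?_⟩
  · rintro rfl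
    have := finrank_top K V
    rw [← eq_top_of_isCompl_bot hcompl.symm] at this
    omega
  · by_cases hxW : x ∈ W
    · exact Or.inl hxW
    · exact Or.inr (hV₂ (subset_span ⟨hx, hxW⟩))

end SmallCircuits

end LinearCircuit

theorem IsLinearCircuit.genericTuple {n : ℕ} {C : Finset (EuclideanSpace ℝ (Fin n))}
    (hC : IsLinearCircuit ℝ C) :
    GenericTuple fun i => (C.equivFin.symm i : EuclideanSpace ℝ (Fin n)) := by
  classical
  set w := fun i => (C.equivFin.symm i : EuclideanSpace ℝ (Fin n))
  have hw : Function.Injective w := Subtype.val_injective.comp C.equivFin.symm.injective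
  have hrange : range w = C := by
    rw [show w = Subtype.val ∘ C.equivFin.symm from rfl, range_comp,
      C.equivFin.symm.range_eq_univ, image_univ, Subtype.range_coe]
  refine ⟨hrange ▸ hC.finrank_span, fun i => ?_⟩
  have hind := hC.linearIndepOn_of_ssubset (Finset.erase_ssubset (C.equivFin.symm i).2)
  exact hind.comp (fun j : {j // j ≠ i} => ⟨w j, by simp [w, hw.ne j.2]⟩) fun j j' h =>
    Subtype.ext <| hw <| by simpa using h

theorem stmt5_general (n : ℕ) (hn : 3 ≤ n) (Λ : Submodule ℤ (EuclideanSpace ℝ (Fin n)))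
    (hgen : ∃ ξ : Fin n → EuclideanSpace ℝ (Fin n),
      (∀ i, ξ i ∈ Λ ∧ ‖ξ i‖ = 1) ∧ Submodule.span ℤ (Set.range ξ) = Λ)
    (hirr : ¬ ∃ V₁ V₂ : Submodule ℝ (EuclideanSpace ℝ (Fin n)),
      V₁ ≠ ⊥ ∧ V₂ ≠ ⊥ ∧ IsCompl V₁ V₂ ∧
        ∀ x ∈ Λ, ‖x‖ = 1 → x ∈ V₁ ∨ x ∈ V₂) :
    ∃ k : ℕ, 4 ≤ k ∧ ∃ w : Fin k → EuclideanSpace ℝ (Fin n),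
      (∀ i, w i ∈ Λ ∧ ‖w i‖ = 1) ∧ Function.Injective w ∧ GenericTuple w := by
  obtain ⟨ξ, hξ, -⟩ := hgen
  by_contra! hsmall
  have hcircuits : ∀ C : Finset (EuclideanSpace ℝ (Fin n)),
      (C : Set _) ⊆ {x | x ∈ Λ ∧ ‖x‖ = 1} → IsLinearCircuit ℝ C → C.card ≤ 3 := by
    intro C hCS hC
    by_contra! hbig
    exact hsmall C.card hbig _ (fun i => hCS (C.equivFin.symm i).2)
      (Subtype.val_injective.comp C.equivFin.symm.injective) hC.genericTuple
  obtain ⟨V₁, V₂, hV₁, hV₂, hcompl, hsplit⟩ :=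
    exists_isCompl_of_forall_isLinearCircuit_card_le_three (by simpa using hn)
      (by simp) hcircuits (hξ ⟨0, by omega⟩)
  exact hirr ⟨V₁, V₂, hV₁, hV₂, hcompl, fun x hx hx1 => hsplit x ⟨hx, hx1⟩⟩

/-- For `n ≥ 3`, if `Λ ⊆ ℝⁿ` is a lattice of rank `n` whose shortest nonzero vectors
have norm `1`, such that the set `Ξ(Λ)` of shortest vectors contains `n` vectors
generating `Λ` over `ℤ`, and `Λ` is s-irreducible (there is no nontrivial direct sum
decomposition `ℝⁿ = V₁ ⊕ V₂` with `Ξ(Λ) ⊆ V₁ ∪ V₂`), then `Ξ(Λ)` contains a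
generic `k`-tuple for some `k ≥ 4`. -/
theorem stmt5 (n : ℕ) (hn : 3 ≤ n) (Λ : Submodule ℤ (EuclideanSpace ℝ (Fin n)))
    (hlat : ∃ b : Fin n → EuclideanSpace ℝ (Fin n),
      LinearIndependent ℝ b ∧ Λ = Submodule.span ℤ (Set.range b))
    (hmin : ∀ x ∈ Λ, x ≠ 0 → 1 ≤ ‖x‖)
    (hgen : ∃ ξ : Fin n → EuclideanSpace ℝ (Fin n),
      (∀ i, ξ i ∈ Λ ∧ ‖ξ i‖ = 1) ∧ Submodule.span ℤ (Set.range ξ) = Λ)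
    (hirr : ¬ ∃ V₁ V₂ : Submodule ℝ (EuclideanSpace ℝ (Fin n)),
      V₁ ≠ ⊥ ∧ V₂ ≠ ⊥ ∧ IsCompl V₁ V₂ ∧
        ∀ x ∈ Λ, ‖x‖ = 1 → x ∈ V₁ ∨ x ∈ V₂) :
    ∃ k : ℕ, 4 ≤ k ∧ ∃ w : Fin k → EuclideanSpace ℝ (Fin n),
      (∀ i, w i ∈ Λ ∧ ‖w i‖ = 1) ∧ Function.Injective w ∧ GenericTuple w :=
  stmt5_general n hn Λ hgen hirr
end

section
/- Let Λ ⊆ ℝⁿ be a prime lattice of rank n, normalized so that its shortest nonzero vectors have norm 1, and let α₁, …, αₙ ∈ Ξ(Λ) be linearly independent (hence, by primality, a ℤ-generating set of Λ). Then every ξ ∈ Ξ(Λ) can be written as ξ = a₁α₁ + ⋯ + aₙαₙ with every coefficient aᵢ ∈ {0, 1, −1}. -/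
/-!
Write `ξ = ∑ aᵢ αᵢ` (integer coefficients, by primality) and fix `j` with `aⱼ ≠ 0`. Replacing
`αⱼ` by `ξ` keeps the family linearly independent and made of shortest vectors, so by primality
it generates `Λ` as well. Expressing `αⱼ` in the new family and comparing `αⱼ`-coefficients
gives `cⱼ aⱼ = 1`, so `aⱼ` is a unit of `ℤ`.
-/

/-- A lattice `Λ ⊆ ℝⁿ` (normalized so that its shortest nonzero vectors have norm `1`)
is prime if every `n` linearly independent vectors of minimal norm generate `Λ` over `ℤ`. -/
def IsPrimeLattice {n : ℕ} (Λ : Submodule ℤ (EuclideanSpace ℝ (Fin n))) : Prop :=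
  ∀ ξ : Fin n → EuclideanSpace ℝ (Fin n),
    (∀ i, ξ i ∈ Λ ∧ ‖ξ i‖ = 1) → LinearIndependent ℝ ξ →
    Submodule.span ℤ (Set.range ξ) = Λ

open Function Submodule

section Exchange

variable {ι R M : Type*} [Fintype ι] [DecidableEq ι] [CommRing R] [AddCommGroup M] [Module R M]

lemma Finset.sum_smul_update (α : ι → M) (c : ι → R) (j : ι) (ξ : M) :
    ∑ i, c i • update α j ξ i = ∑ i, c i • α i + c j • (ξ - α j) := by
  rw [Pi.update_eq_sub_add_single]
  simp only [Pi.add_apply, Pi.sub_apply, smul_add, smul_sub, Finset.sum_add_distrib,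
    Finset.sum_sub_distrib, Pi.single_apply, smul_ite, smul_zero, Finset.sum_ite_eq',
    Finset.mem_univ, if_true]
  abel

lemma LinearIndependent.update_sum_smul {α : ι → M} (hα : LinearIndependent R α) {a : ι → R}
    {j : ι} (ha : a j ∈ nonZeroDivisors R) :
    LinearIndependent R (Function.update α j (∑ i, a i • α i)) := by
  refine hα.update j _ ⟨1, one_mem _, (Finsupp.linearEquivFunOnFinite R R ι).symm a, ha, ?_⟩
  rw [one_smul, Finsupp.linearCombination_eq_fintype_linearCombination_apply,
    Fintype.linearCombination_apply]

lemma LinearIndependent.isUnit_of_mem_span_update {α : ι → M} (hα : LinearIndependent R α)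
    {a : ι → R} {j : ι} (h : α j ∈ span R (Set.range (Function.update α j (∑ i, a i • α i)))) :
    IsUnit (a j) := by
  obtain ⟨c, hc⟩ := (mem_span_range_iff_exists_fun R).mp h
  rw [Finset.sum_smul_update] at hc
  have hcoeff : ∑ i, (c i + c j * a i) • α i = ∑ i, (Pi.single j (1 + c j) : ι → R) i • α i := by
    simp_rw [add_smul, Finset.sum_add_distrib, mul_smul, ← Finset.smul_sum, Pi.single_apply,
      ite_smul, zero_smul, Finset.sum_ite_eq', Finset.mem_univ, if_true]
    linear_combination (norm := module) hc
  have hj := Fintype.linearIndependent_iffₛ.mp hα _ _ hcoeff j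
  rw [Pi.single_eq_same] at hj
  exact IsUnit.of_mul_eq_one_right (c j) (by linear_combination hj)

end Exchange

theorem stmt6_general (n : ℕ) (Λ : Submodule ℤ (EuclideanSpace ℝ (Fin n)))
    (hprime : IsPrimeLattice Λ)
    (α : Fin n → EuclideanSpace ℝ (Fin n))
    (hα : ∀ i, α i ∈ Λ ∧ ‖α i‖ = 1)
    (hind : LinearIndependent ℝ α)
    (ξ : EuclideanSpace ℝ (Fin n)) (hξ : ξ ∈ Λ) (hξ1 : ‖ξ‖ = 1) :
    ∃ a : Fin n → ℤ, (∀ i, a i = 0 ∨ a i = 1 ∨ a i = -1) ∧ ξ = ∑ i, a i • α i := by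
  obtain ⟨a, ha⟩ := (mem_span_range_iff_exists_fun ℤ).mp (hprime α hα hind ▸ hξ)
  refine ⟨a, fun j => (eq_or_ne (a j) 0).imp_right fun h0 => Int.isUnit_iff.mp ?_, ha.symm⟩
  have hξℝ : ∑ i, (a i : ℝ) • α i = ξ := by simpa only [Int.cast_smul_eq_zsmul] using ha
  have hshort : ∀ i, update α j ξ i ∈ Λ ∧ ‖update α j ξ i‖ = 1 := fun i => by
    rcases eq_or_ne i j with rfl | hij
    · simpa using ⟨hξ, hξ1⟩
    · simpa [hij] using hα i
  have hind' : LinearIndependent ℝ (update α j ξ) :=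
    hξℝ ▸ hind.update_sum_smul (mem_nonZeroDivisors_of_ne_zero (Int.cast_ne_zero.mpr h0))
  refine (hind.restrict_scalars' ℤ).isUnit_of_mem_span_update ?_
  rw [ha, hprime _ hshort hind']
  exact (hα j).1

/-- In a prime lattice `Λ` of rank `n` with shortest nonzero norm `1`, every shortest
vector `ξ` is a `ℤ`-linear combination of any `n` linearly independent shortest vectors
`α₁, …, αₙ` with all coefficients in `{0, 1, −1}`. -/
theorem stmt6 (n : ℕ) (Λ : Submodule ℤ (EuclideanSpace ℝ (Fin n)))
    (hlat : ∃ b : Fin n → EuclideanSpace ℝ (Fin n),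
      LinearIndependent ℝ b ∧ Λ = Submodule.span ℤ (Set.range b))
    (hmin : ∀ x ∈ Λ, x ≠ 0 → 1 ≤ ‖x‖)
    (hprime : IsPrimeLattice Λ)
    (α : Fin n → EuclideanSpace ℝ (Fin n))
    (hα : ∀ i, α i ∈ Λ ∧ ‖α i‖ = 1)
    (hind : LinearIndependent ℝ α)
    (ξ : EuclideanSpace ℝ (Fin n)) (hξ : ξ ∈ Λ) (hξ1 : ‖ξ‖ = 1) :
    ∃ a : Fin n → ℤ, (∀ i, a i = 0 ∨ a i = 1 ∨ a i = -1) ∧ ξ = ∑ i, a i • α i :=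
  stmt6_general n Λ hprime α hα hind ξ hξ hξ1
end

section
/- Let n ≤ 4 and let Λ ⊆ ℝⁿ be a lattice of rank n, normalized so that its shortest nonzero vectors have norm 1, and suppose Ξ(Λ) spans ℝⁿ. Then either Λ is prime, or n = 4 and there exist four pairwise orthogonal vectors e₁, e₂, e₃, e₄ ∈ Ξ(Λ) such that Λ = span_ℤ{e₁, e₂, e₃, (e₁+e₂+e₃+e₄)/2}. -/
/-!
Let `ξ` be `n` independent minimal vectors of `Λ`. Every `x ∈ Λ` is congruent modulo `ℤξ` to some
`w = ∑ cᵢ ξᵢ ∈ Λ` with `|cᵢ| ≤ 1/2`. Minimality of `Λ` against `w ± ξᵢ` gives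
`2 |⟪w, ξᵢ⟫| ≤ ‖w‖²`, hence `‖w‖² = ∑ cᵢ ⟪w, ξᵢ⟫ ≤ n ‖w‖² / 4`. So `w = 0`, i.e. `ξ` generates `Λ`,
unless `n = 4`; then all these inequalities are equalities: every `cᵢ = ±1/2`, so `Λ` is generated
by `ξ` and `y = (ξ₁ + ξ₂ + ξ₃ + ξ₄)/2`, and the equalities for `y` and `y - ξᵢ` force
`⟪ξᵢ, ξⱼ⟫ = 0`.
-/

open Submodule Set
open scoped RealInnerProductSpace

section Reduction

variable {M : Type*} [AddCommGroup M] [Module ℝ M] {ι : Type*} [Fintype ι] {ξ : ι → M}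

theorem exists_abs_le_half_sub_mem_span_int {x : M} (hx : x ∈ span ℝ (range ξ)) :
    ∃ c : ι → ℝ, (∀ i, |c i| ≤ 1 / 2) ∧ x - ∑ i, c i • ξ i ∈ span ℤ (range ξ) := by
  obtain ⟨a, rfl⟩ := (mem_span_range_iff_exists_fun ℝ).1 hx
  refine ⟨fun i => a i - round (a i), fun i => abs_sub_round _, ?_⟩
  have : ∑ i, a i • ξ i - ∑ i, (a i - round (a i)) • ξ i = ∑ i, round (a i) • ξ i := by
    simp only [← Finset.sum_sub_distrib, ← sub_smul, sub_sub_cancel, Int.cast_smul_eq_zsmul]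
  rw [this]
  exact sum_mem fun i _ => smul_mem _ _ (subset_span (mem_range_self i))

theorem half_sum_sub_sum_smul_mem_span_int {c : ι → ℝ} (hc : ∀ i, c i = 1 / 2 ∨ c i = -1 / 2) :
    (2⁻¹ : ℝ) • ∑ i, ξ i - ∑ i, c i • ξ i ∈ span ℤ (range ξ) := by
  rw [Finset.smul_sum, ← Finset.sum_sub_distrib]
  refine sum_mem fun i _ => ?_
  rcases hc i with h | h <;> rw [h]
  · norm_num
  · rw [← sub_smul, show (2⁻¹ : ℝ) - -1 / 2 = 1 by norm_num, one_smul]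
    exact subset_span (mem_range_self i)

end Reduction

theorem eq_span_of_mem_span_int_or_sub_half_sum_mem {M : Type*} [AddCommGroup M] [Module ℝ M]
    {Λ : Submodule ℤ M} {ξ : Fin 4 → M}
    (hξ : ∀ i, ξ i ∈ Λ) (hy : (2⁻¹ : ℝ) • (ξ 0 + ξ 1 + ξ 2 + ξ 3) ∈ Λ)
    (hΛ : ∀ x ∈ Λ, x ∈ span ℤ (range ξ) ∨
      x - (2⁻¹ : ℝ) • (ξ 0 + ξ 1 + ξ 2 + ξ 3) ∈ span ℤ (range ξ)) :
    Λ = span ℤ {ξ 0, ξ 1, ξ 2, (2⁻¹ : ℝ) • (ξ 0 + ξ 1 + ξ 2 + ξ 3)} := by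
  set y := (2⁻¹ : ℝ) • (ξ 0 + ξ 1 + ξ 2 + ξ 3)
  set S := span ℤ {ξ 0, ξ 1, ξ 2, y}
  have hyS : y ∈ S := subset_span (by simp)
  have hrange : span ℤ (range ξ) ≤ S := by
    refine span_le.2 (range_subset_iff.2 fun k => ?_)
    fin_cases k
    · exact subset_span (by simp)
    · exact subset_span (by simp)
    · exact subset_span (by simp)
    · have h3 : ξ 3 = y + y - ξ 0 - ξ 1 - ξ 2 := by simp only [y]; module
      change ξ 3 ∈ S
      rw [h3]
      refine sub_mem (sub_mem (sub_mem (add_mem hyS hyS) ?_) ?_) ?_ <;> exact subset_span (by simp)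
  refine le_antisymm (fun x hx => ?_) (span_le.2 ?_)
  · rcases hΛ x hx with h | h
    · exact hrange h
    · simpa using add_mem (hrange h) hyS
  · simp [insert_subset_iff, hξ, hy]

theorem LinearIndependent.sum_smul_ne_zero {R M : Type*} [Ring R] [AddCommGroup M] [Module R M]
    {ι : Type*} [Fintype ι] {ξ : ι → M} (hli : LinearIndependent R ξ) {c : ι → R} {k : ι}
    (hk : c k ≠ 0) : ∑ i, c i • ξ i ≠ 0 :=
  fun h => hk (Fintype.linearIndependent_iff.1 hli c h k)

section MinimalVectors

variable {E : Type*} [NormedAddCommGroup E] [InnerProductSpace ℝ E] {Λ : Submodule ℤ E}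

theorem two_mul_abs_inner_le_norm_sq (hmin : ∀ x ∈ Λ, x ≠ 0 → 1 ≤ ‖x‖) {w e : E}
    (hw : w ∈ Λ) (he : e ∈ Λ) (he1 : ‖e‖ = 1) (hwe : w ≠ e) (hwe' : w ≠ -e) :
    2 * |⟪w, e⟫| ≤ ‖w‖ ^ 2 := by
  have hsub := hmin _ (Λ.sub_mem hw he) (sub_ne_zero.2 hwe)
  have hadd := hmin _ (Λ.add_mem hw he) (fun h => hwe' (eq_neg_of_add_eq_zero_left h))
  have hsub2 : 1 ≤ ‖w - e‖ ^ 2 := one_le_pow₀ hsub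
  have hadd2 : 1 ≤ ‖w + e‖ ^ 2 := one_le_pow₀ hadd
  rw [norm_sub_sq_real, he1] at hsub2
  rw [norm_add_sq_real, he1] at hadd2
  cases abs_cases ⟪w, e⟫ <;> nlinarith

theorem sum_mul_inner_sum_smul {ι : Type*} [Fintype ι] (ξ : ι → E) (c : ι → ℝ) :
    ∑ k, c k * ⟪∑ i, c i • ξ i, ξ k⟫ = ‖∑ i, c i • ξ i‖ ^ 2 := by
  simp only [← real_inner_smul_right, ← inner_sum, real_inner_self_eq_norm_sq]

theorem sum_norm_sq_div_four_sub_mul_inner {ι : Type*} [Fintype ι] (ξ : ι → E) (c : ι → ℝ) :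
    ∑ k, (‖∑ i, c i • ξ i‖ ^ 2 / 4 - c k * ⟪∑ i, c i • ξ i, ξ k⟫) =
      ((Fintype.card ι : ℝ) / 4 - 1) * ‖∑ i, c i • ξ i‖ ^ 2 := by
  rw [Finset.sum_sub_distrib, sum_mul_inner_sum_smul, Finset.sum_const, Finset.card_univ,
    nsmul_eq_mul]
  ring

variable {ι : Type*} [Fintype ι] {ξ : ι → E} (hξ : ∀ i, ξ i ∈ Λ ∧ ‖ξ i‖ = 1)
include hξ

theorem exists_sum_smul_mem_sub_mem_span_int {x : E} (hx : x ∈ Λ)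
    (hxs : x ∈ span ℝ (range ξ)) :
    ∃ c : ι → ℝ, (∀ i, |c i| ≤ 1 / 2) ∧ ∑ i, c i • ξ i ∈ Λ ∧
      x - ∑ i, c i • ξ i ∈ span ℤ (range ξ) := by
  obtain ⟨c, hc, hrem⟩ := exists_abs_le_half_sub_mem_span_int hxs
  refine ⟨c, hc, ?_, hrem⟩
  simpa using Λ.sub_mem hx (span_le.2 (range_subset_iff.2 fun i => (hξ i).1) hrem)

variable (hmin : ∀ x ∈ Λ, x ≠ 0 → 1 ≤ ‖x‖) (hli : LinearIndependent ℝ ξ)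
include hmin hli

theorem two_mul_abs_inner_sum_smul_le {c : ι → ℝ} (hc : ∀ i, |c i| ≤ 1 / 2)
    (hw : ∑ i, c i • ξ i ∈ Λ) (k : ι) :
    2 * |⟪∑ i, c i • ξ i, ξ k⟫| ≤ ‖∑ i, c i • ξ i‖ ^ 2 := by
  classical
  have hck := abs_le.1 (hc k)
  have hsingle : ξ k = ∑ i, (Pi.single k 1 : ι → ℝ) i • ξ i := by simp
  refine two_mul_abs_inner_le_norm_sq hmin hw (hξ k).1 (hξ k).2 (fun h => ?_) (fun h => ?_)
  · refine hli.sum_smul_ne_zero (c := c - Pi.single k 1) (k := k) (by simp; linarith) ?_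
    simp only [Pi.sub_apply, sub_smul, Finset.sum_sub_distrib, ← hsingle, h, sub_self]
  · refine hli.sum_smul_ne_zero (c := c + Pi.single k 1) (k := k) (by simp; linarith) ?_
    simp only [Pi.add_apply, add_smul, Finset.sum_add_distrib, ← hsingle, h, neg_add_cancel]

theorem mul_inner_sum_smul_le {c : ι → ℝ} (hc : ∀ i, |c i| ≤ 1 / 2)
    (hw : ∑ i, c i • ξ i ∈ Λ) (k : ι) :
    c k * ⟪∑ i, c i • ξ i, ξ k⟫ ≤ ‖∑ i, c i • ξ i‖ ^ 2 / 4 := by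
  have := two_mul_abs_inner_sum_smul_le hξ hmin hli hc hw k
  calc c k * ⟪∑ i, c i • ξ i, ξ k⟫ ≤ |c k| * |⟪∑ i, c i • ξ i, ξ k⟫| :=
        (le_abs_self _).trans (abs_mul _ _).le
    _ ≤ 1 / 2 * (‖∑ i, c i • ξ i‖ ^ 2 / 2) :=
        mul_le_mul (hc k) (by linarith) (abs_nonneg _) (by norm_num)
    _ = ‖∑ i, c i • ξ i‖ ^ 2 / 4 := by ring

theorem four_le_card_of_sum_smul_ne_zero {c : ι → ℝ} (hc : ∀ i, |c i| ≤ 1 / 2)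
    (hw : ∑ i, c i • ξ i ∈ Λ) (hne : ∑ i, c i • ξ i ≠ 0) : 4 ≤ Fintype.card ι := by
  have hslack : 0 ≤ ((Fintype.card ι : ℝ) / 4 - 1) * ‖∑ i, c i • ξ i‖ ^ 2 := by
    rw [← sum_norm_sq_div_four_sub_mul_inner]
    exact Finset.sum_nonneg fun k _ => sub_nonneg.2 (mul_inner_sum_smul_le hξ hmin hli hc hw k)
  have hpos : 0 < ‖∑ i, c i • ξ i‖ ^ 2 := by positivity
  have : (4 : ℝ) ≤ Fintype.card ι := by nlinarith
  exact_mod_cast this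

theorem mul_inner_sum_smul_eq_of_card_eq_four (h4 : Fintype.card ι = 4) {c : ι → ℝ}
    (hc : ∀ i, |c i| ≤ 1 / 2) (hw : ∑ i, c i • ξ i ∈ Λ) (k : ι) :
    c k * ⟪∑ i, c i • ξ i, ξ k⟫ = ‖∑ i, c i • ξ i‖ ^ 2 / 4 := by
  have hslack : ∑ k, (‖∑ i, c i • ξ i‖ ^ 2 / 4 - c k * ⟪∑ i, c i • ξ i, ξ k⟫) = 0 := by
    rw [sum_norm_sq_div_four_sub_mul_inner, h4]
    norm_num
  have := (Finset.sum_eq_zero_iff_of_nonneg fun k _ =>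
    sub_nonneg.2 (mul_inner_sum_smul_le hξ hmin hli hc hw k)).1 hslack k (Finset.mem_univ k)
  linarith

theorem eq_half_or_eq_neg_half_of_card_eq_four (h4 : Fintype.card ι = 4) {c : ι → ℝ}
    (hc : ∀ i, |c i| ≤ 1 / 2) (hw : ∑ i, c i • ξ i ∈ Λ) (hne : ∑ i, c i • ξ i ≠ 0) (k : ι) :
    c k = 1 / 2 ∨ c k = -1 / 2 := by
  have heq := mul_inner_sum_smul_eq_of_card_eq_four hξ hmin hli h4 hc hw k
  have hinner := two_mul_abs_inner_sum_smul_le hξ hmin hli hc hw k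
  have hpos : 0 < ‖∑ i, c i • ξ i‖ ^ 2 := by positivity
  have : ‖∑ i, c i • ξ i‖ ^ 2 / 4 ≤ |c k| * (‖∑ i, c i • ξ i‖ ^ 2 / 2) := by
    rw [← heq]
    exact (le_abs_self _).trans ((abs_mul _ _).trans_le
      (mul_le_mul_of_nonneg_left (by linarith) (abs_nonneg _)))
  have habs : |c k| = 1 / 2 := le_antisymm (hc k) (by nlinarith)
  rcases abs_eq (by norm_num : (0 : ℝ) ≤ 1 / 2) |>.1 habs with h | h
  · exact Or.inl h
  · exact Or.inr (by linarith)

theorem four_le_card_of_notMem_span_int {x : E} (hx : x ∈ Λ) (hxs : x ∈ span ℝ (range ξ))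
    (hnot : x ∉ span ℤ (range ξ)) : 4 ≤ Fintype.card ι := by
  obtain ⟨c, hc, hw, hrem⟩ := exists_sum_smul_mem_sub_mem_span_int hξ hx hxs
  refine four_le_card_of_sum_smul_ne_zero hξ hmin hli hc hw fun h0 => hnot ?_
  simpa [h0] using hrem

theorem mem_span_int_or_sub_half_sum_mem_span_int (h4 : Fintype.card ι = 4) {x : E}
    (hx : x ∈ Λ) (hxs : x ∈ span ℝ (range ξ)) :
    x ∈ span ℤ (range ξ) ∨ x - (2⁻¹ : ℝ) • ∑ i, ξ i ∈ span ℤ (range ξ) := by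
  obtain ⟨c, hc, hw, hrem⟩ := exists_sum_smul_mem_sub_mem_span_int hξ hx hxs
  by_cases h0 : ∑ i, c i • ξ i = 0
  · left
    simpa [h0] using hrem
  · right
    have hhalf := half_sum_sub_sum_smul_mem_span_int (ξ := ξ)
      (eq_half_or_eq_neg_half_of_card_eq_four hξ hmin hli h4 hc hw h0)
    convert sub_mem hrem hhalf using 1
    abel

theorem half_sum_mem_of_notMem_span_int (h4 : Fintype.card ι = 4) {x : E} (hx : x ∈ Λ)
    (hxs : x ∈ span ℝ (range ξ)) (hnot : x ∉ span ℤ (range ξ)) :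
    (2⁻¹ : ℝ) • ∑ i, ξ i ∈ Λ := by
  have hrem := (mem_span_int_or_sub_half_sum_mem_span_int hξ hmin hli h4 hx hxs).resolve_left hnot
  simpa using Λ.sub_mem hx (span_le.2 (range_subset_iff.2 fun i => (hξ i).1) hrem)

theorem inner_eq_zero_of_half_sum_mem (h4 : Fintype.card ι = 4)
    (hy : (2⁻¹ : ℝ) • ∑ i, ξ i ∈ Λ) {i j : ι} (hij : i ≠ j) : ⟪ξ i, ξ j⟫ = 0 := by
  classical
  set y := (2⁻¹ : ℝ) • ∑ i, ξ i
  have hequality (c : ι → ℝ) (hc : ∀ k, |c k| = 1 / 2) (hw : ∑ k, c k • ξ k ∈ Λ) (k : ι) :=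
    mul_inner_sum_smul_eq_of_card_eq_four hξ hmin hli h4 (fun k => (hc k).le) hw k
  have hy₀ : ∑ k, (fun _ => (1 / 2 : ℝ)) k • ξ k = y := by simp [y, Finset.smul_sum]
  have hy₁ : ∑ k, (fun k => if k = i then (-1 / 2 : ℝ) else 1 / 2) k • ξ k = y - ξ i := by
    calc ∑ k, (fun k => if k = i then (-1 / 2 : ℝ) else 1 / 2) k • ξ k
        = ∑ k, ((2⁻¹ : ℝ) • ξ k - if k = i then ξ k else 0) :=
          Finset.sum_congr rfl fun k _ => by dsimp only; split_ifs <;> module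
      _ = y - ξ i := by simp [y, Finset.sum_sub_distrib, Finset.smul_sum]
  have hi := hequality _ (fun _ => by norm_num) (hy₀ ▸ hy) i
  have hj := hequality _ (fun _ => by norm_num) (hy₀ ▸ hy) j
  have hi' := hequality _ (fun k => by split_ifs <;> norm_num) (hy₁ ▸ Λ.sub_mem hy (hξ i).1) i
  have hj' := hequality _ (fun k => by split_ifs <;> norm_num) (hy₁ ▸ Λ.sub_mem hy (hξ i).1) j
  simp only [hy₀, hy₁, ↓reduceIte, if_neg hij.symm] at hi hj hi' hj'
  rw [inner_sub_left, real_inner_self_eq_norm_sq, (hξ i).2] at hi'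
  rw [inner_sub_left] at hj'
  rw [norm_sub_sq_real, (hξ i).2] at hi' hj'
  linarith

end MinimalVectors

theorem stmt7_general (n : ℕ) (hn : n ≤ 4) (Λ : Submodule ℤ (EuclideanSpace ℝ (Fin n)))
    (hmin : ∀ x ∈ Λ, x ≠ 0 → 1 ≤ ‖x‖) :
    IsPrimeLattice Λ ∨
      (n = 4 ∧ ∃ e : Fin 4 → EuclideanSpace ℝ (Fin n),
        (∀ i, e i ∈ Λ ∧ ‖e i‖ = 1) ∧
        (∀ i j, i ≠ j → (inner ℝ (e i) (e j) : ℝ) = 0) ∧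
        Λ = Submodule.span ℤ
          {e 0, e 1, e 2, (2⁻¹ : ℝ) • (e 0 + e 1 + e 2 + e 3)}) := by
  by_cases hprime : IsPrimeLattice Λ
  · exact Or.inl hprime
  simp only [IsPrimeLattice, not_forall] at hprime
  obtain ⟨ξ, hξ, hli, hne⟩ := hprime
  have hspan (x : EuclideanSpace ℝ (Fin n)) : x ∈ span ℝ (range ξ) := by
    rw [hli.span_eq_top_of_card_eq_finrank' (by simp)]
    exact mem_top
  obtain ⟨x, hx, hnot⟩ :=
    SetLike.exists_of_lt ((span_le.2 (range_subset_iff.2 fun i => (hξ i).1)).lt_of_ne hne)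
  obtain rfl : n = 4 := le_antisymm hn <| by
    simpa using four_le_card_of_notMem_span_int hξ hmin hli hx (hspan x) hnot
  have h4 : Fintype.card (Fin 4) = 4 := Fintype.card_fin 4
  have hy := half_sum_mem_of_notMem_span_int hξ hmin hli h4 hx (hspan x) hnot
  refine Or.inr ⟨rfl, ξ, hξ, fun i j hij => inner_eq_zero_of_half_sum_mem hξ hmin hli h4 hy hij, ?_⟩
  rw [Fin.sum_univ_four] at hy
  refine eq_span_of_mem_span_int_or_sub_half_sum_mem (fun i => (hξ i).1) hy fun z hz => ?_
  simpa [Fin.sum_univ_four] using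
    mem_span_int_or_sub_half_sum_mem_span_int hξ hmin hli h4 hz (hspan z)

/-- For `n ≤ 4`, a lattice `Λ ⊆ ℝⁿ` of rank `n`, normalized so that its shortest
nonzero vectors have norm `1` and such that the set of shortest vectors spans `ℝⁿ`,
is either prime, or `n = 4` and `Λ` is generated over `ℤ` by
`e₁, e₂, e₃, (e₁+e₂+e₃+e₄)/2` for four pairwise orthogonal shortest vectors `eᵢ`. -/
theorem stmt7 (n : ℕ) (hn : n ≤ 4) (Λ : Submodule ℤ (EuclideanSpace ℝ (Fin n)))
    (hlat : ∃ b : Fin n → EuclideanSpace ℝ (Fin n),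
      LinearIndependent ℝ b ∧ Λ = Submodule.span ℤ (Set.range b))
    (hmin : ∀ x ∈ Λ, x ≠ 0 → 1 ≤ ‖x‖)
    (hspan : Submodule.span ℝ {x : EuclideanSpace ℝ (Fin n) | x ∈ Λ ∧ ‖x‖ = 1} = ⊤) :
    IsPrimeLattice Λ ∨
      (n = 4 ∧ ∃ e : Fin 4 → EuclideanSpace ℝ (Fin n),
        (∀ i, e i ∈ Λ ∧ ‖e i‖ = 1) ∧
        (∀ i j, i ≠ j → (inner ℝ (e i) (e j) : ℝ) = 0) ∧
        Λ = Submodule.span ℤ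
          {e 0, e 1, e 2, (2⁻¹ : ℝ) • (e 0 + e 1 + e 2 + e 3)}) :=
  stmt7_general n hn Λ hmin
end

section
/- Let Y be a finite subset of ℤⁿ containing the standard basis vectors e₁, …, eₙ, such that any n linearly independent elements of Y form a ℤ-basis of ℤⁿ. Then every square minor of every matrix whose rows are elements of Y lies in {0, 1, −1}; that is, for any elements A_{j₁}, …, A_{j_k} of Y and any k column indices i₁ < ⋯ < i_k, the determinant of the k×k matrix of the corresponding entries equals 0, 1, or −1. -/
/-!
Complete the columns `cols` to all of `Fin n` and the rows `A j` by the standard basis vectors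
`e_i` for the remaining columns `i`. The resulting `n × n` matrix is block upper triangular with
an identity block, so its determinant is the given minor; its rows lie in `Y`, so by the
hypothesis on `Y` (or linear dependence of the rows) that determinant is `0` or `±1`.
-/

namespace Matrix

theorem det_of_sumElim_single {m ι n R : Type*} [Fintype m] [Fintype ι] [Fintype n]
    [DecidableEq m] [DecidableEq ι] [DecidableEq n] [CommRing R]
    (A : m → n → R) (e : m ⊕ ι ≃ n) :
    (of fun i => Sum.elim A (fun x => Pi.single (e (.inr x)) 1) (e.symm i)).det =
      (of fun j l => A j (e (.inl l))).det := by
  have hblocks : (of fun i => Sum.elim A (fun x => Pi.single (e (.inr x)) 1) (e.symm i)) =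
      reindex e e (fromBlocks (of fun j l => A j (e (.inl l))) (of fun j x => A j (e (.inr x)))
        0 1) := by
    ext i j
    obtain ⟨x, rfl⟩ := e.surjective i
    obtain ⟨y, rfl⟩ := e.surjective j
    rcases x with x | x <;> rcases y with y | y <;>
      simp [Pi.single_apply, one_apply, e.injective.eq_iff, eq_comm]
  rw [hblocks, det_reindex_self, det_fromBlocks_zero₂₁, det_one, mul_one]

end Matrix

theorem det_eq_zero_or_eq_one_or_eq_neg_one_of_rows_mem {n : ℕ} {Y : Finset (Fin n → ℤ)}
    (hprime : ∀ B : Fin n → (Fin n → ℤ), (∀ i, B i ∈ Y) → LinearIndependent ℤ B →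
      (Matrix.of B).det = 1 ∨ (Matrix.of B).det = -1)
    {B : Fin n → (Fin n → ℤ)} (hB : ∀ i, B i ∈ Y) :
    (Matrix.of B).det = 0 ∨ (Matrix.of B).det = 1 ∨ (Matrix.of B).det = -1 := by
  by_cases hli : LinearIndependent ℤ B
  · exact .inr (hprime B hB hli)
  · exact .inl (Matrix.det_eq_zero_of_not_linearIndependent_rows hli)

/-- For a finite set `Y ⊆ ℤⁿ` containing the standard basis vectors, such that any `n`
linearly independent elements of `Y` form a `ℤ`-basis of `ℤⁿ` (i.e. have determinant
`±1` as rows of a matrix), every square minor of any matrix whose rows are elements of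
`Y` lies in `{0, 1, −1}`. -/
theorem stmt8 (n : ℕ) (Y : Finset (Fin n → ℤ))
    (hbasis : ∀ i : Fin n, Pi.single i 1 ∈ Y)
    (hprime : ∀ B : Fin n → (Fin n → ℤ), (∀ i, B i ∈ Y) → LinearIndependent ℤ B →
      (Matrix.of B).det = 1 ∨ (Matrix.of B).det = -1)
    (k : ℕ) (A : Fin k → (Fin n → ℤ)) (hA : ∀ j, A j ∈ Y)
    (cols : Fin k → Fin n) (hcols : StrictMono cols) :
    (Matrix.of fun j l : Fin k => A j (cols l)).det = 0 ∨
    (Matrix.of fun j l : Fin k => A j (cols l)).det = 1 ∨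
    (Matrix.of fun j l : Fin k => A j (cols l)).det = -1 := by
  classical
  let e : Fin k ⊕ ↥(Set.range cols)ᶜ ≃ Fin n :=
    (Equiv.sumCongr (Equiv.ofInjective cols hcols.injective) (Equiv.refl _)).trans
      (Equiv.Set.sumCompl (Set.range cols))
  let rows : Fin k ⊕ ↥(Set.range cols)ᶜ → Fin n → ℤ :=
    Sum.elim A fun x => Pi.single (e (.inr x)) 1
  have hrows : ∀ x, rows x ∈ Y := by
    rintro (j | x)
    exacts [hA j, hbasis _]
  let B : Fin n → Fin n → ℤ := fun i => rows (e.symm i)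
  have hB : ∀ i, B i ∈ Y := fun i => hrows (e.symm i)
  have hminor : (Matrix.of B).det = (Matrix.of fun j l : Fin k => A j (cols l)).det :=
    Matrix.det_of_sumElim_single A e
  rw [← hminor]
  exact det_eq_zero_or_eq_one_or_eq_neg_one_of_rows_mem hprime hB
end

section
/- Let Y be a finite subset of ℤⁿ containing the standard basis vectors e₁, …, eₙ, such that any n linearly independent elements of Y form a ℤ-basis of ℤⁿ. If A = (a₁, …, aₙ) and B = (b₁, …, bₙ) are elements of Y whose n-th coordinates satisfy aₙ = bₙ = 1, then aᵢ · bᵢ ≥ 0 for every index i. -/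
/-!
Let `m` be the last index and suppose `Aᵢ Bᵢ < 0`, so `i ≠ m`. Replacing rows `m` and `i` of the
identity matrix by `A` and `B` gives a matrix with rows in `Y` whose determinant is the
`2 × 2` minor `Bᵢ - Aᵢ`. This is nonzero, so the rows are linearly independent and the
determinant is `±1`; but `Aᵢ` and `Bᵢ` are nonzero of opposite signs, so `|Bᵢ - Aᵢ| ≥ 2`.
-/

namespace Matrix

theorem updateRow_apply_mem {ι α : Type*} [DecidableEq ι] {M : Matrix ι ι α} {s : Set (ι → α)}
    (hM : ∀ k, M k ∈ s) {i : ι} {v : ι → α} (hv : v ∈ s) (k : ι) : M.updateRow i v k ∈ s :=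
  (Function.forall_update_iff M fun _ r => r ∈ s).2 ⟨hv, fun k _ => hM k⟩ k

variable {ι R : Type*} [Fintype ι] [DecidableEq ι] [CommRing R]

theorem sum_smul_one_row (v : ι → R) : ∑ k, v k • (1 : Matrix ι ι R) k = v := by
  rw [← vecMul_eq_sum, vecMul_one]

theorem det_one_updateRow (i : ι) (v : ι → R) :
    ((1 : Matrix ι ι R).updateRow i v).det = v i := by
  conv_lhs => rw [← sum_smul_one_row v]
  rw [det_updateRow_sum, det_one, smul_eq_mul, mul_one]

-- `v` is the combination `∑ k, v k • M k`: the term `k = i` vanishes and the others are `v k • eₖ`.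
theorem det_updateRow_of_apply_eq_zero {M : Matrix ι ι R} {i : ι}
    (hM : ∀ k, k ≠ i → M k = (1 : Matrix ι ι R) k) (j : ι) {v : ι → R} (hv : v i = 0) :
    (M.updateRow j v).det = v j * M.det := by
  have hv_sum : ∑ k, v k • M k = v := by
    conv_rhs => rw [← sum_smul_one_row v]
    refine Finset.sum_congr rfl fun k _ => ?_
    rcases eq_or_ne k i with rfl | hk
    · simp [hv]
    · rw [hM k hk]
  rw [← hv_sum, det_updateRow_sum, smul_eq_mul, hv_sum]

theorem det_updateRow_updateRow_one {i j : ι} (hij : i ≠ j) {u : ι → R} (hu : u i = 1)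
    (v : ι → R) :
    (((1 : Matrix ι ι R).updateRow i u).updateRow j v).det = v j - v i * u j := by
  set M := (1 : Matrix ι ι R).updateRow i u
  have hMi : M i = u := updateRow_self
  -- subtracting `v i` times row `i` from row `j` clears coordinate `i` of row `j`
  have hv : v = (v - v i • u) + v i • M i := by rw [hMi, sub_add_cancel]
  conv_lhs => rw [hv]
  rw [det_updateRow_add, det_updateRow_smul, det_updateRow_eq_zero hij, mul_zero, add_zero,
    det_updateRow_of_apply_eq_zero (fun k hk => updateRow_ne hk) j (by simp [hu]),
    det_one_updateRow, hu]
  simp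

end Matrix

/-- For a finite set `Y ⊆ ℤⁿ` containing the standard basis vectors, such that any `n`
linearly independent elements of `Y` form a `ℤ`-basis of `ℤⁿ`, any two elements `A, B`
of `Y` whose `n`-th coordinate equals `1` satisfy `Aᵢ · Bᵢ ≥ 0` for every index `i`. -/
theorem stmt9 (n : ℕ) (hn : 0 < n) (Y : Finset (Fin n → ℤ))
    (hbasis : ∀ i : Fin n, Pi.single i 1 ∈ Y)
    (hprime : ∀ B : Fin n → (Fin n → ℤ), (∀ i, B i ∈ Y) → LinearIndependent ℤ B →
      (Matrix.of B).det = 1 ∨ (Matrix.of B).det = -1)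
    (A B : Fin n → ℤ) (hA : A ∈ Y) (hB : B ∈ Y)
    (hAn : A ⟨n - 1, by omega⟩ = 1) (hBn : B ⟨n - 1, by omega⟩ = 1) :
    ∀ i, 0 ≤ A i * B i := by
  intro i
  by_contra! hneg
  set m : Fin n := ⟨n - 1, by omega⟩
  have him : i ≠ m := by
    intro h
    rw [h, hAn, hBn] at hneg
    exact absurd hneg (by norm_num)
  set T := ((1 : Matrix (Fin n) (Fin n) ℤ).updateRow m A).updateRow i B
  have hdet : T.det = B i - A i := by
    rw [Matrix.det_updateRow_updateRow_one him.symm hAn, hBn, one_mul]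
  have hrows : ∀ k, T k ∈ Y := by
    refine Matrix.updateRow_apply_mem (Matrix.updateRow_apply_mem (fun k => ?_) hA) hB
    rw [show (1 : Matrix (Fin n) (Fin n) ℤ) k = Pi.single k 1 from
      funext fun _ => Matrix.one_eq_pi_single]
    exact hbasis k
  have hT : T.det ≠ 0 := by
    rw [hdet, sub_ne_zero]
    intro h
    rw [h] at hneg
    exact absurd hneg (not_lt.2 (mul_self_nonneg _))
  have hunit : T.det = 1 ∨ T.det = -1 :=
    hprime T hrows (Matrix.linearIndependent_rows_of_det_ne_zero hT)
  rw [hdet] at hunit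
  rcases mul_neg_iff.1 hneg with ⟨hA0, hB0⟩ | ⟨hA0, hB0⟩ <;> omega
end

section
/- Let Y be a finite subset of ℤⁿ containing the standard basis vectors e₁, …, eₙ, such that any n linearly independent elements of Y form a ℤ-basis of ℤⁿ, and let i₁, i₂, i₃ be distinct indices. Suppose A ∈ Y satisfies A_{i₁}·A_{i₂} = 1 and A_{i₃} = 0. Then: (a) every B ∈ Y satisfies B_{i₁}·B_{i₂} ≥ 0; (b) any two elements B, C ∈ Y with B_{i₃} = C_{i₃} = 1 satisfy (B_{i₁} − C_{i₁})(B_{i₂} − C_{i₂}) ≥ 0, and the same holds for any two elements B, C ∈ Y with B_{i₃} = C_{i₃} = −1. -/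
/-!
Completing any `k` elements of `Y` by standard basis vectors `eᵢ`, for `i` outside `k` chosen
coordinates, gives an `n × n` matrix whose determinant is the `k × k` minor on those coordinates;
by the hypothesis on `Y` that determinant is `0` or `±1`. So the matrix with rows `Y` is totally
unimodular. Now `A` restricted to `(i₁, i₂, i₃)` is `ε (1, 1, 0)` with `ε = ±1`: the `2 × 2` minor
of `A, B` on `(i₁, i₂)` is `ε (B_{i₂} - B_{i₁})`, and the `3 × 3` minor of `A, B, C` on
`(i₁, i₂, i₃)` is `± ((B_{i₂} - C_{i₂}) - (B_{i₁} - C_{i₁}))`. Two integers differing by at most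
`1` have a nonnegative product.
-/

open Matrix Function

theorem Matrix.det_of_extend_single {m κ R : Type*} [Fintype m] [DecidableEq m] [Fintype κ]
    [DecidableEq κ] [CommRing R] {ι : κ → m} (hι : Injective ι) (v : κ → m → R) :
    (of (extend ι v fun r => Pi.single r 1)).det = (of fun a b => v a (ι b)).det := by
  set M := of (extend ι v fun r => Pi.single r 1)
  have hM_out : ∀ r, r ∉ Set.range ι → M r = Pi.single r 1 := fun r hr =>
    extend_apply' v (fun r => Pi.single r 1) r hr
  have hM_in : ∀ a, M (ι a) = v a := hι.extend_apply v (fun r => Pi.single r 1)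
  rw [M.twoBlockTriangular_det (· ∈ Set.range ι) fun r hr s hs => by
    rw [hM_out r hr, Pi.single_eq_of_ne (by rintro rfl; exact hr hs)]]
  have hcompl : toSquareBlockProp M (· ∉ Set.range ι) = 1 := by
    ext r s
    simp [toSquareBlockProp_def, hM_out r r.2, Pi.single_apply, one_apply,
      Subtype.ext_iff, eq_comm]
  let e := Equiv.ofInjective ι hι
  have hrange : toSquareBlockProp M (· ∈ Set.range ι) =
      (of fun a b => v a (ι b)).submatrix e.symm e.symm := by
    ext r s
    obtain ⟨a, rfl⟩ := e.surjective r
    obtain ⟨b, rfl⟩ := e.surjective s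
    simp [toSquareBlockProp_def, e, hM_in]
  rw [hcompl, det_one, mul_one, hrange]
  convert det_submatrix_equiv_self e.symm _

theorem Matrix.IsTotallyUnimodular.abs_det_submatrix_le_one {m n : Type*} {A : Matrix m n ℤ}
    (hA : A.IsTotallyUnimodular) {k : ℕ} (f : Fin k → m) (g : Fin k → n) :
    |(A.submatrix f g).det| ≤ 1 := by
  obtain ⟨s, hs⟩ := (isTotallyUnimodular_iff A).1 hA k f g
  rw [← hs]
  cases s <;> simp

theorem isTotallyUnimodular_of_det_eq_one_or_neg_one {n : ℕ} {Y : Finset (Fin n → ℤ)}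
    (hbasis : ∀ i : Fin n, Pi.single i 1 ∈ Y)
    (hprime : ∀ B : Fin n → (Fin n → ℤ), (∀ i, B i ∈ Y) → LinearIndependent ℤ B →
      (of B).det = 1 ∨ (of B).det = -1) :
    (of fun B : Y => (B : Fin n → ℤ)).IsTotallyUnimodular := by
  intro k f g _ hg
  set M := extend g (fun a => (f a : Fin n → ℤ)) fun r => Pi.single r 1
  have hM : ∀ r, M r ∈ Y := by
    intro r
    by_cases hr : ∃ a, g a = r
    · obtain ⟨a, rfl⟩ := hr
      simp only [M, hg.extend_apply]
      exact (f a).2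
    · simp only [M, extend_apply' _ _ _ hr]
      exact hbasis r
  have hdet : (of M).det = ((of fun B : Y => (B : Fin n → ℤ)).submatrix f g).det :=
    det_of_extend_single hg _
  by_cases h0 : (of M).det = 0
  · exact ⟨0, by rw [← hdet, h0]; rfl⟩
  · rcases hprime M hM (linearIndependent_rows_of_det_ne_zero h0) with h | h
    · exact ⟨1, by rw [← hdet, h]; rfl⟩
    · exact ⟨-1, by rw [← hdet, h]; rfl⟩

theorem Int.mul_nonneg_of_abs_sub_le_one {u w : ℤ} (h : |w - u| ≤ 1) : 0 ≤ u * w := by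
  rcases abs_le.1 h with ⟨h₁, h₂⟩
  rcases lt_trichotomy u 0 with hu | rfl | hu
  · nlinarith
  · simp
  · nlinarith

theorem Int.eq_and_abs_eq_one_of_mul_eq_one {a b : ℤ} (h : a * b = 1) : b = a ∧ |a| = 1 := by
  rcases Int.eq_one_or_neg_one_of_mul_eq_one' h with ⟨rfl, rfl⟩ | ⟨rfl, rfl⟩ <;> simp

theorem mul_nonneg_of_abs_det_fin_two_le_one {a₁ a₂ b₁ b₂ : ℤ} (ha : a₁ * a₂ = 1)
    (h : |!![a₁, a₂; b₁, b₂].det| ≤ 1) : 0 ≤ b₁ * b₂ := by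
  obtain ⟨ha₂, ha₁⟩ := Int.eq_and_abs_eq_one_of_mul_eq_one ha
  rw [ha₂] at h
  have hdet : !![a₁, a₁; b₁, b₂].det = a₁ * (b₂ - b₁) := by
    rw [det_fin_two_of]; ring
  exact Int.mul_nonneg_of_abs_sub_le_one (by simpa [hdet, abs_mul, ha₁] using h)

theorem sub_mul_sub_nonneg_of_abs_det_fin_three_le_one {a₁ a₂ b₁ b₂ c₁ c₂ s : ℤ}
    (ha : a₁ * a₂ = 1) (hs : |s| = 1) (h : |!![a₁, a₂, 0; b₁, b₂, s; c₁, c₂, s].det| ≤ 1) :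
    0 ≤ (b₁ - c₁) * (b₂ - c₂) := by
  obtain ⟨ha₂, ha₁⟩ := Int.eq_and_abs_eq_one_of_mul_eq_one ha
  rw [ha₂] at h
  have hdet : !![a₁, a₁, 0; b₁, b₂, s; c₁, c₂, s].det = a₁ * s * ((b₂ - c₂) - (b₁ - c₁)) := by
    simp only [det_fin_three, of_apply, cons_val', cons_val_zero, cons_val_one, cons_val,
      cons_val_fin_one]
    ring
  exact Int.mul_nonneg_of_abs_sub_le_one (by simpa [hdet, abs_mul, ha₁, hs] using h)

theorem stmt10_general (n : ℕ) (Y : Finset (Fin n → ℤ))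
    (hbasis : ∀ i : Fin n, Pi.single i 1 ∈ Y)
    (hprime : ∀ B : Fin n → (Fin n → ℤ), (∀ i, B i ∈ Y) → LinearIndependent ℤ B →
      (Matrix.of B).det = 1 ∨ (Matrix.of B).det = -1)
    (i₁ i₂ i₃ : Fin n)
    (A : Fin n → ℤ) (hA : A ∈ Y) (hA12 : A i₁ * A i₂ = 1) (hA3 : A i₃ = 0) :
    (∀ B ∈ Y, 0 ≤ B i₁ * B i₂) ∧
    (∀ B ∈ Y, ∀ C ∈ Y, B i₃ = 1 → C i₃ = 1 →
      0 ≤ (B i₁ - C i₁) * (B i₂ - C i₂)) ∧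
    (∀ B ∈ Y, ∀ C ∈ Y, B i₃ = -1 → C i₃ = -1 →
      0 ≤ (B i₁ - C i₁) * (B i₂ - C i₂)) := by
  have hY := isTotallyUnimodular_of_det_eq_one_or_neg_one hbasis hprime
  have minor₂ (B) (hB : B ∈ Y) : |!![A i₁, A i₂; B i₁, B i₂].det| ≤ 1 := by
    have h := hY.abs_det_submatrix_le_one ![⟨A, hA⟩, ⟨B, hB⟩] ![i₁, i₂]
    rw [eta_fin_two (submatrix _ _ _)] at h
    simpa only [submatrix_apply, of_apply, cons_val_zero, cons_val_one] using h
  have sub_mul_sub_nonneg (s : ℤ) (hs : |s| = 1) (B) (hB : B ∈ Y) (C) (hC : C ∈ Y) (hB3 : B i₃ = s)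
      (hC3 : C i₃ = s) : 0 ≤ (B i₁ - C i₁) * (B i₂ - C i₂) := by
    have h := hY.abs_det_submatrix_le_one ![⟨A, hA⟩, ⟨B, hB⟩, ⟨C, hC⟩] ![i₁, i₂, i₃]
    rw [eta_fin_three (submatrix _ _ _)] at h
    refine sub_mul_sub_nonneg_of_abs_det_fin_three_le_one hA12 hs ?_
    simpa only [submatrix_apply, of_apply, cons_val_zero, cons_val_one, cons_val_two, tail_cons,
      head_cons, hA3, hB3, hC3] using h
  exact ⟨fun B hB => mul_nonneg_of_abs_det_fin_two_le_one hA12 (minor₂ B hB),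
    sub_mul_sub_nonneg 1 abs_one, sub_mul_sub_nonneg (-1) (by simp)⟩

/-- For a finite set `Y ⊆ ℤⁿ` containing the standard basis vectors, such that any `n`
linearly independent elements of `Y` form a `ℤ`-basis of `ℤⁿ`: if some `A ∈ Y` has
`A_{i₁} · A_{i₂} = 1` and `A_{i₃} = 0` for distinct indices `i₁, i₂, i₃`, then
(a) every `B ∈ Y` satisfies `B_{i₁} · B_{i₂} ≥ 0`, and (b) any two elements of `Y`
whose `i₃`-th coordinate equals `1` (resp. both equal `−1`) satisfy
`(B_{i₁} − C_{i₁})(B_{i₂} − C_{i₂}) ≥ 0`. -/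
theorem stmt10 (n : ℕ) (Y : Finset (Fin n → ℤ))
    (hbasis : ∀ i : Fin n, Pi.single i 1 ∈ Y)
    (hprime : ∀ B : Fin n → (Fin n → ℤ), (∀ i, B i ∈ Y) → LinearIndependent ℤ B →
      (Matrix.of B).det = 1 ∨ (Matrix.of B).det = -1)
    (i₁ i₂ i₃ : Fin n) (h12 : i₁ ≠ i₂) (h13 : i₁ ≠ i₃) (h23 : i₂ ≠ i₃)
    (A : Fin n → ℤ) (hA : A ∈ Y) (hA12 : A i₁ * A i₂ = 1) (hA3 : A i₃ = 0) :
    (∀ B ∈ Y, 0 ≤ B i₁ * B i₂) ∧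
    (∀ B ∈ Y, ∀ C ∈ Y, B i₃ = 1 → C i₃ = 1 →
      0 ≤ (B i₁ - C i₁) * (B i₂ - C i₂)) ∧
    (∀ B ∈ Y, ∀ C ∈ Y, B i₃ = -1 → C i₃ = -1 →
      0 ≤ (B i₁ - C i₁) * (B i₂ - C i₂)) :=
  stmt10_general n Y hbasis hprime i₁ i₂ i₃ A hA hA12 hA3
end

section
/- For every positive integer n, the tridiagonal matrix Qₙ is invertible, its inverse has entries (Qₙ⁻¹)_{ij} = (2/(n+1)) · min(i,j) · (n+1 − max(i,j)), and Qₙ⁻¹ = (2/(n+1)) · Σ_{A ∈ Xₙ} AᵀA, where the sum runs over the n(n+1)/2 interval-indicator vectors of the ladder set Xₙ (regarded as row vectors); equivalently Qₙ · (Σ_{A ∈ Xₙ} AᵀA) = ((n+1)/2) · Iₙ. -/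
/-- The tridiagonal matrix `Qₙ` with diagonal entries `1` and entries `−1/2` immediately
above and below the diagonal. -/
noncomputable def Qn (n : ℕ) : Matrix (Fin n) (Fin n) ℝ :=
  Matrix.of fun i j =>
    if i = j then 1
    else if (i : ℕ) + 1 = (j : ℕ) ∨ (j : ℕ) + 1 = (i : ℕ) then -(1 / 2)
    else 0

/-- The indicator vector `χ_{[p,q]}` of the interval `[p, q]`, as a row vector in `ℝⁿ`. -/
def intervalVec {n : ℕ} (p q : Fin n) : Fin n → ℝ :=
  fun i => if p ≤ i ∧ i ≤ q then 1 else 0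

/-- The sum `Σ_{A ∈ Xₙ} AᵀA` of rank-one matrices over the ladder set `Xₙ` of
interval-indicator vectors. -/
noncomputable def ladderSum (n : ℕ) : Matrix (Fin n) (Fin n) ℝ :=
  ∑ p : Fin n, ∑ q : Fin n,
    if p ≤ q then Matrix.vecMulVec (intervalVec p q) (intervalVec p q) else 0

/-!
`Qₙ` is half the discrete Laplacian on `{1, …, n}` with Dirichlet conditions at `0` and `n + 1`.
The `(i, j)` entry of `Σ AᵀA` counts the intervals containing both `i` and `j`, namely
`min(i,j) · (n + 1 − max(i,j))`. As a function of `i` this is piecewise linear, its slope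
dropping by `n + 1` at `i = j`, and it vanishes at `0` and `n + 1`; hence its negative half
second difference is `(n + 1)/2` times the delta at `j`, i.e. `Qₙ Σ AᵀA = ((n + 1)/2) Iₙ`.
-/

open Finset Matrix

/-- Indices are `1`-based: row `i : Fin n` of `Qₙ` corresponds to `s = i + 1`. -/
def green (n s t : ℕ) : ℝ :=
  ((min s t : ℕ) : ℝ) * ((n : ℝ) + 1 - ((max s t : ℕ) : ℝ))

section Green

variable {n s t : ℕ}

lemma green_of_le (h : s ≤ t) : green n s t = s * ((n : ℝ) + 1 - t) := by
  rw [green, min_eq_left h, max_eq_right h]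

lemma green_of_ge (h : t ≤ s) : green n s t = t * ((n : ℝ) + 1 - s) := by
  rw [green, min_eq_right h, max_eq_left h]

lemma green_zero_left : green n 0 t = 0 := by
  simp [green_of_le (Nat.zero_le t)]

lemma green_succ_left_of_le (ht : t ≤ n + 1) : green n (n + 1) t = 0 := by
  simp [green_of_ge ht]

lemma green_second_difference :
    green n (s + 1) t - (green n s t + green n (s + 2) t) / 2 =
      if s + 1 = t then ((n : ℝ) + 1) / 2 else 0 := by
  rcases lt_trichotomy (s + 1) t with h | rfl | h
  · rw [if_neg h.ne, green_of_le h.le, green_of_le (by omega), green_of_le (by omega)]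
    push_cast; ring
  · rw [if_pos rfl, green_of_le le_rfl, green_of_le (by omega), green_of_ge (by omega)]
    push_cast; ring
  · rw [if_neg h.ne', green_of_ge h.le, green_of_ge (by omega), green_of_ge (by omega)]
    push_cast; ring

end Green

section

variable {n : ℕ}

lemma Qn_apply (i k : Fin n) :
    Qn n i k = (if (k : ℕ) = i then 1 else 0) - 1 / 2 * (if (k : ℕ) + 1 = i then 1 else 0)
      - 1 / 2 * (if (k : ℕ) = i + 1 then 1 else 0) := by
  simp only [Qn, of_apply, Fin.ext_iff]
  split_ifs <;> first | omega | norm_num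

lemma Qn_mulVec_apply (F : ℕ → ℝ) (h0 : F 0 = 0) (hn : F (n + 1) = 0) (i : Fin n) :
    (Qn n *ᵥ fun k => F (k + 1)) i = F (i + 1) - (F i + F (i + 2)) / 2 := by
  let q : ℕ → ℝ := fun m =>
    (if m = i + 1 then 1 else 0) - 1 / 2 * (if m = i then 1 else 0)
      - 1 / 2 * (if m = i + 2 then 1 else 0)
  have hsum : ∑ m ∈ range (n + 2), q m * F m = F (i + 1) - (F i + F (i + 2)) / 2 := by
    have := i.isLt
    simp only [q, sub_mul, mul_assoc, ite_mul, one_mul, zero_mul, sum_sub_distrib, ← mul_sum,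
      sum_ite_eq', mem_range]
    rw [if_pos (by omega), if_pos (by omega), if_pos (by omega)]
    ring
  have hboundary : ∑ m ∈ range (n + 2), q m * F m = ∑ k ∈ range n, q (k + 1) * F (k + 1) := by
    rw [sum_range_succ, sum_range_succ', h0, hn]
    simp
  rw [← hsum, hboundary, mulVec, dotProduct,
    ← Fin.sum_univ_eq_sum_range (fun k => q (k + 1) * F (k + 1))]
  congr 1
  ext k
  simp [q, Qn_apply]

lemma intervalVec_eq_zero_of_lt {p q : Fin n} (h : q < p) : intervalVec p q = 0 := by
  funext i
  simp only [intervalVec, Pi.zero_apply, ite_eq_right_iff, and_imp]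
  intro hp hq
  exact absurd (hp.trans hq) (not_le.2 h)

lemma intervalVec_mul_intervalVec (p q i j : Fin n) :
    intervalVec p q i * intervalVec p q j =
      (if p ≤ min i j then 1 else 0) * (if max i j ≤ q then 1 else 0) := by
  simp only [intervalVec, le_min_iff, max_le_iff]
  split_ifs <;> simp_all

lemma ladderSum_eq_sum_vecMulVec :
    ladderSum n = ∑ p : Fin n, ∑ q : Fin n, vecMulVec (intervalVec p q) (intervalVec p q) := by
  refine sum_congr rfl fun p _ => sum_congr rfl fun q _ => ?_
  rcases le_or_gt p q with h | h
  · rw [if_pos h]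
  · rw [if_neg h.not_ge, intervalVec_eq_zero_of_lt h, zero_vecMulVec]

lemma ladderSum_apply (i j : Fin n) : ladderSum n i j = green n (i + 1) (j + 1) := by
  simp only [ladderSum_eq_sum_vecMulVec, Matrix.sum_apply, vecMulVec_apply,
    intervalVec_mul_intervalVec, ← sum_mul_sum, sum_boole, filter_ge_eq_Iic, filter_le_eq_Ici,
    Fin.card_Iic, Fin.card_Ici]
  have hmax : (max i j : ℕ) ≤ n := (max i j).isLt.le
  rw [green, min_add_add_right, max_add_add_right, ← Fin.coe_min, ← Fin.coe_max]
  push_cast [Nat.cast_sub hmax]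
  ring

lemma Qn_mul_ladderSum : Qn n * ladderSum n = (((n : ℝ) + 1) / 2) • 1 := by
  ext i j
  have hcol : (Qn n * ladderSum n) i j = (Qn n *ᵥ fun k => green n (k + 1) (j + 1)) i := by
    simp only [mul_apply, mulVec, dotProduct, ladderSum_apply]
  rw [hcol, Qn_mulVec_apply (fun s => green n s (j + 1)) green_zero_left
    (green_succ_left_of_le (by omega)), green_second_difference, Matrix.smul_apply, one_apply,
    smul_eq_mul]
  simp [Fin.val_inj]

end

theorem stmt13_general (n : ℕ) :
    IsUnit (Qn n) ∧
    (∀ i j : Fin n, (Qn n)⁻¹ i j =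
      (2 / ((n : ℝ) + 1)) * ((min (i : ℕ) (j : ℕ) : ℝ) + 1) *
        ((n : ℝ) + 1 - ((max (i : ℕ) (j : ℕ) : ℝ) + 1))) ∧
    (Qn n)⁻¹ = (2 / ((n : ℝ) + 1)) • ladderSum n := by
  have hright : Qn n * ((2 / ((n : ℝ) + 1)) • ladderSum n) = 1 := by
    rw [Matrix.mul_smul, Qn_mul_ladderSum, smul_smul]
    field_simp
    simp
  have hinv := inv_eq_right_inv hright
  refine ⟨(isUnit_iff_isUnit_det _).2 (isUnit_det_of_right_inverse hright), fun i j => ?_, hinv⟩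
  rw [hinv, Matrix.smul_apply, ladderSum_apply, green, smul_eq_mul]
  push_cast
  rw [min_add_add_right, max_add_add_right]
  ring

/-- `Qₙ` is invertible, its inverse has entries
`(Qₙ⁻¹)_{ij} = (2/(n+1)) · min(i,j) · (n+1 − max(i,j))` (with `1`-based indices),
and `Qₙ⁻¹ = (2/(n+1)) Σ_{A ∈ Xₙ} AᵀA`. -/
theorem stmt13 (n : ℕ) (hn : 0 < n) :
    IsUnit (Qn n) ∧
    (∀ i j : Fin n, (Qn n)⁻¹ i j =
      (2 / ((n : ℝ) + 1)) * ((min (i : ℕ) (j : ℕ) : ℝ) + 1) *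
        ((n : ℝ) + 1 - ((max (i : ℕ) (j : ℕ) : ℝ) + 1))) ∧
    (Qn n)⁻¹ = (2 / ((n : ℝ) + 1)) • ladderSum n :=
  stmt13_general n
end

section
/- Let n ≥ 3 and 2 ≤ k ≤ n−1. For every nonzero integer vector v = (v₁, …, vₙ) ∈ ℤⁿ, the quadratic form q(v) = Σ_{i=1}^{n} vᵢ² − Σ_{i=1}^{n−1} vᵢ·v_{i+1} + (1/k)·v_{n−k}·vₙ satisfies q(v) ≥ 1, with equality if and only if v or −v belongs to the faulted ladder set X_{n,k}; that is, equality holds exactly when ±v is the indicator χ_{[p,q]} of an interval with q ≤ n−1, or the indicator χ_{[p,n]} with p > n−k. Equivalently, the symmetric matrix Q_{n,k} = Qₙ + (1/(2k))(E_{n,n−k} + E_{n−k,n}) satisfies v Q_{n,k} vᵀ ≥ 1 for all nonzero v ∈ ℤⁿ with equality exactly on ±X_{n,k}. -/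
/-!
Extend `v` by zeros on both sides. Then `2 v Qₙ vᵀ` is the energy `Σ (steps)²` of the integer
lattice path `0, v₁, …, vₙ, 0`, which dominates its total variation; a nonzero path must go up and
come back, so the energy is at least `2`, with equality exactly for `±χ_{[p,q]}`. This gives
`k · q(v) = k · v Qₙ vᵀ + a b ≥ k` (with `a = v_{n-k}`, `b = vₙ`) whenever `a b = 0`, with equality
on the intervals missing `n - k` or `n`. When `a b ≠ 0`, Cauchy–Schwarz on the `k` steps from `a`
to `b` gives `k · Σ steps² ≥ (b - a)²`, which absorbs the cross term:
`2 k q(v) ≥ k · (energy before a) + a² + b² + k b² > 2 k`.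
-/

open Finset

namespace FaultedLadder

/-- `v Qₙ vᵀ` for `v = (w 0, …, w (n - 1))`, provided `w n = 0`. -/
def pathForm (n : ℕ) (w : ℕ → ℤ) : ℤ := ∑ i ∈ range n, (w i ^ 2 - w i * w (i + 1))

def pathEnergy (n : ℕ) (w : ℕ → ℤ) : ℤ := w 0 ^ 2 + ∑ i ∈ range n, (w (i + 1) - w i) ^ 2

def intervalIndicator (p q : ℕ) (ε : ℤ) : ℕ → ℤ := fun i => if p ≤ i ∧ i ≤ q then ε else 0

theorem two_mul_pathForm (n : ℕ) (w : ℕ → ℤ) :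
    2 * pathForm n w = pathEnergy n w - w n ^ 2 := by
  induction n with
  | zero => simp [pathForm, pathEnergy]
  | succ n ih =>
    simp only [pathForm, pathEnergy, sum_range_succ] at ih ⊢
    linear_combination ih

theorem abs_le_sq (x : ℤ) : |x| ≤ x ^ 2 :=
  Int.natCast_natAbs x ▸ Int.natAbs_le_self_sq x

theorem abs_sub_le_sum_sq {w : ℕ → ℤ} {j l : ℕ} (hjl : j ≤ l) :
    |w l - w j| ≤ ∑ i ∈ Ico j l, (w (i + 1) - w i) ^ 2 :=
  calc |w l - w j| = |∑ i ∈ Ico j l, (w (i + 1) - w i)| := by rw [sum_Ico_sub w hjl]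
    _ ≤ ∑ i ∈ Ico j l, |w (i + 1) - w i| := abs_sum_le_sum_abs _ _
    _ ≤ ∑ i ∈ Ico j l, (w (i + 1) - w i) ^ 2 :=
      sum_le_sum fun i _ => abs_le_sq _

theorem abs_add_sum_add_abs_le_pathEnergy {w : ℕ → ℤ} {p q n : ℕ} (hpq : p ≤ q) (hqn : q ≤ n) :
    |w p| + ∑ i ∈ Ico p q, (w (i + 1) - w i) ^ 2 + |w n - w q| ≤ pathEnergy n w := by
  have hsplit : ∑ i ∈ range n, (w (i + 1) - w i) ^ 2 = ∑ i ∈ Ico 0 p, (w (i + 1) - w i) ^ 2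
      + ∑ i ∈ Ico p q, (w (i + 1) - w i) ^ 2 + ∑ i ∈ Ico q n, (w (i + 1) - w i) ^ 2 := by
    rw [sum_Ico_consecutive _ (Nat.zero_le p) hpq, sum_Ico_consecutive _ (Nat.zero_le q) hqn,
      range_eq_Ico]
  rw [pathEnergy, hsplit]
  linarith [abs_le_sq (w 0), abs_sub_abs_le_abs_sub (w p) (w 0),
    abs_sub_le_sum_sq (w := w) (Nat.zero_le p), abs_sub_le_sum_sq (w := w) hqn]

theorem two_le_pathEnergy {w : ℕ → ℤ} {n i : ℕ} (hwn : w n = 0) (hin : i ≤ n) (hwi : w i ≠ 0) :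
    2 ≤ pathEnergy n w := by
  have := abs_add_sum_add_abs_le_pathEnergy (w := w) le_rfl hin
  rw [Ico_self, sum_empty, hwn, zero_sub, abs_neg] at this
  linarith [Int.one_le_abs hwi]

theorem eq_intervalIndicator_of_pathEnergy_le_two {w : ℕ → ℤ} {n : ℕ}
    (hw : ∀ i, n ≤ i → w i = 0) (hne : w ≠ 0) (hE : pathEnergy n w ≤ 2) :
    ∃ p q ε, p ≤ q ∧ q < n ∧ (ε = 1 ∨ ε = -1) ∧ w = intervalIndicator p q ε := by
  have hsupp : ∀ i, w i ≠ 0 → i ∈ (range n).filter (w · ≠ 0) := fun i hi =>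
    mem_filter.mpr ⟨mem_range.mpr (not_le.mp (mt (hw i) hi)), hi⟩
  obtain ⟨i₀, hi₀⟩ := Function.ne_iff.mp hne
  set s := (range n).filter (w · ≠ 0)
  have hs : s.Nonempty := ⟨i₀, hsupp i₀ hi₀⟩
  obtain ⟨-, hp⟩ := mem_filter.mp (min'_mem s hs)
  obtain ⟨hqn, hq⟩ := mem_filter.mp (max'_mem s hs)
  set p := s.min' hs
  set q := s.max' hs
  have hpq : p ≤ q := min'_le_max' s hs
  -- `p`, `q` are the first and last nonzero entries: `|w p| + |w q| ≥ 2` uses up the whole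
  -- energy, so no step between them is nonzero.
  have hbound := abs_add_sum_add_abs_le_pathEnergy (w := w) hpq (mem_range.mp hqn).le
  rw [hw n le_rfl, zero_sub, abs_neg] at hbound
  have hG : ∑ i ∈ Ico p q, (w (i + 1) - w i) ^ 2 ≤ 0 := by
    linarith [Int.one_le_abs hp, Int.one_le_abs hq]
  have hconst : ∀ i, p ≤ i → i ≤ q → w i = w p := fun i hpi hiq => by
    have h := abs_sub_le_sum_sq (w := w) hpi
    have hsub : ∑ j ∈ Ico p i, (w (j + 1) - w j) ^ 2 ≤ ∑ j ∈ Ico p q, (w (j + 1) - w j) ^ 2 :=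
      sum_le_sum_of_subset_of_nonneg (Ico_subset_Ico_right hiq) fun _ _ _ => sq_nonneg _
    exact sub_eq_zero.mp (abs_nonpos_iff.mp (by linarith))
  refine ⟨p, q, w p, hpq, mem_range.mp hqn, ?_, ?_⟩
  · have hG0 : 0 ≤ ∑ i ∈ Ico p q, (w (i + 1) - w i) ^ 2 := sum_nonneg fun _ _ => sq_nonneg _
    exact (abs_eq zero_le_one).mp <|
      le_antisymm (by linarith [Int.one_le_abs hq]) (Int.one_le_abs hp)
  · funext i
    by_cases hi : p ≤ i ∧ i ≤ q
    · simp only [intervalIndicator, if_pos hi, hconst i hi.1 hi.2]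
    · simp only [intervalIndicator, if_neg hi]
      by_contra hwi
      exact hi ⟨min'_le s i (hsupp i hwi), le_max' s i (hsupp i hwi)⟩

theorem pathForm_intervalIndicator {p q n : ℕ} {ε : ℤ} (hpq : p ≤ q) (hqn : q < n)
    (hε : ε ^ 2 = 1) : pathForm n (intervalIndicator p q ε) = 1 := by
  have hterm : ∀ i, intervalIndicator p q ε i ^ 2
      - intervalIndicator p q ε i * intervalIndicator p q ε (i + 1) = if q = i then 1 else 0 := by
    intro i
    simp only [intervalIndicator]
    split_ifs <;> first | omega | simp [← sq, hε]
  simp only [pathForm, hterm, sum_ite_eq, mem_range, if_pos hqn]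

theorem pathEnergy_eq_two_mul_pathForm {w : ℕ → ℤ} {n : ℕ} (hwn : w n = 0) :
    pathEnergy n w = 2 * pathForm n w := by
  rw [two_mul_pathForm, hwn]; ring

theorem one_le_pathForm {w : ℕ → ℤ} {n : ℕ} (hw : ∀ i, n ≤ i → w i = 0) (hne : w ≠ 0) :
    1 ≤ pathForm n w := by
  obtain ⟨i, hi⟩ := Function.ne_iff.mp hne
  have := two_le_pathEnergy (hw n le_rfl) (not_le.mp (mt (hw i) hi)).le hi
  rw [pathEnergy_eq_two_mul_pathForm (hw n le_rfl)] at this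
  linarith

theorem pathForm_eq_one_iff {w : ℕ → ℤ} {n : ℕ} (hw : ∀ i, n ≤ i → w i = 0) :
    pathForm n w = 1 ↔
      ∃ p q ε, p ≤ q ∧ q < n ∧ (ε = 1 ∨ ε = -1) ∧ w = intervalIndicator p q ε := by
  constructor
  · intro h
    have hne : w ≠ 0 := by rintro rfl; simp [pathForm] at h
    refine eq_intervalIndicator_of_pathEnergy_le_two hw hne ?_
    rw [pathEnergy_eq_two_mul_pathForm (hw n le_rfl), h]; norm_num
  · rintro ⟨p, q, ε, hpq, hqn, hε, rfl⟩
    exact pathForm_intervalIndicator hpq hqn (by rcases hε with rfl | rfl <;> norm_num)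

theorem pathEnergy_add_add_one (w : ℕ → ℤ) (c k : ℕ) :
    pathEnergy (c + k + 1) w = pathEnergy c w + ∑ j ∈ range k, (w (c + j + 1) - w (c + j)) ^ 2
      + (w (c + k + 1) - w (c + k)) ^ 2 := by
  simp only [pathEnergy, sum_range_succ, sum_range_add, add_assoc]

theorem lt_mul_pathForm_add_mul {w : ℕ → ℤ} {c k : ℕ} (hw : w (c + k + 1) = 0)
    (hab : w c * w (c + k) ≠ 0) : (k : ℤ) < k * pathForm (c + k + 1) w + w c * w (c + k) := by
  set a := w c
  set b := w (c + k)
  set G := ∑ j ∈ range k, (w (c + j + 1) - w (c + j)) ^ 2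
  have ha : 1 ≤ |a| := Int.one_le_abs (left_ne_zero_of_mul hab)
  have hb : 1 ≤ b ^ 2 := by nlinarith [Int.one_le_abs (right_ne_zero_of_mul hab), sq_abs b]
  have hEc : |a| ≤ pathEnergy c w := by
    simpa using abs_add_sum_add_abs_le_pathEnergy (w := w) (le_refl c) (le_refl c)
  have hCS : (b - a) ^ 2 ≤ k * G := by
    have hsum : ∑ j ∈ range k, (w (c + j + 1) - w (c + j)) = b - a :=
      sum_range_sub (fun j => w (c + j)) k
    have := sq_sum_le_card_mul_sum_sq (s := range k) (f := fun j => w (c + j + 1) - w (c + j))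
    rwa [hsum, card_range] at this
  have hE : 2 * pathForm (c + k + 1) w = pathEnergy c w + G + b ^ 2 := by
    rw [← pathEnergy_eq_two_mul_pathForm hw, pathEnergy_add_add_one, hw]; ring
  have hk : (k : ℤ) * 1 ≤ k * pathEnergy c w := by gcongr; linarith
  have hkb : (k : ℤ) * 1 ≤ k * b ^ 2 := by gcongr
  nlinarith [sq_nonneg a]

/-- `k · v Q_{n,k} vᵀ` for `v = (w 0, …, w (n - 1))`, provided `w n = 0`. -/
def faultedForm (n k : ℕ) (w : ℕ → ℤ) : ℤ := k * pathForm n w + w (n - k - 1) * w (n - 1)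

theorem lt_faultedForm_of_mul_ne_zero {w : ℕ → ℤ} {n k : ℕ} (hkn : k < n) (hw : w n = 0)
    (hab : w (n - k - 1) * w (n - 1) ≠ 0) : (k : ℤ) < faultedForm n k w := by
  obtain ⟨c, rfl⟩ : ∃ c, n = c + k + 1 := ⟨n - k - 1, by omega⟩
  rw [show c + k + 1 - k - 1 = c by omega, show c + k + 1 - 1 = c + k by omega] at hab
  rw [faultedForm, show c + k + 1 - k - 1 = c by omega, show c + k + 1 - 1 = c + k by omega]
  exact lt_mul_pathForm_add_mul hw hab

theorem intervalIndicator_mul_eq_zero_iff {p q x y : ℕ} {ε : ℤ} (hε : ε ≠ 0) :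
    intervalIndicator p q ε x * intervalIndicator p q ε y = 0 ↔
      ¬(p ≤ x ∧ x ≤ q ∧ p ≤ y ∧ y ≤ q) := by
  simp only [intervalIndicator]
  split_ifs <;> simp [hε] <;> omega

theorem le_faultedForm {w : ℕ → ℤ} {n k : ℕ} (hkn : k < n) (hw : ∀ i, n ≤ i → w i = 0)
    (hne : w ≠ 0) : (k : ℤ) ≤ faultedForm n k w := by
  by_cases hab : w (n - k - 1) * w (n - 1) = 0
  · rw [faultedForm, hab, add_zero]
    exact le_mul_of_one_le_right (Nat.cast_nonneg k) (one_le_pathForm hw hne)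
  · exact (lt_faultedForm_of_mul_ne_zero hkn (hw n le_rfl) hab).le

theorem faultedForm_eq_iff {w : ℕ → ℤ} {n k : ℕ} (hk : 0 < k) (hkn : k < n)
    (hw : ∀ i, n ≤ i → w i = 0) :
    faultedForm n k w = k ↔ ∃ p q ε, p ≤ q ∧ q < n ∧ (q < n - 1 ∨ n - k ≤ p) ∧
      (ε = 1 ∨ ε = -1) ∧ w = intervalIndicator p q ε := by
  by_cases hab : w (n - k - 1) * w (n - 1) = 0
  · rw [faultedForm, hab, add_zero, mul_eq_left₀ (by exact_mod_cast hk.ne'), pathForm_eq_one_iff hw]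
    refine exists₃_congr fun p q ε => ⟨?_, ?_⟩
    · rintro ⟨hpq, hqn, hε, rfl⟩
      have hε0 : ε ≠ 0 := by rcases hε with rfl | rfl <;> norm_num
      have := (intervalIndicator_mul_eq_zero_iff hε0).mp hab
      exact ⟨hpq, hqn, by omega, hε, rfl⟩
    · rintro ⟨hpq, hqn, -, hε, rfl⟩
      exact ⟨hpq, hqn, hε, rfl⟩
  · refine iff_of_false (lt_faultedForm_of_mul_ne_zero hkn (hw n le_rfl) hab).ne' ?_
    rintro ⟨p, q, ε, hpq, hqn, hfault, hε, rfl⟩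
    have hε0 : ε ≠ 0 := by rcases hε with rfl | rfl <;> norm_num
    exact hab <| (intervalIndicator_mul_eq_zero_iff hε0).mpr (by omega)

section ZeroExtension

variable {n : ℕ} (v : Fin n → ℤ)

theorem extend_val_of_lt {i : ℕ} (hi : i < n) : Function.extend Fin.val v 0 i = v ⟨i, hi⟩ :=
  Fin.val_injective.extend_apply v 0 ⟨i, hi⟩

theorem extend_val_of_le {i : ℕ} (hi : n ≤ i) : Function.extend Fin.val v 0 i = 0 :=
  Function.extend_apply' _ _ _ fun ⟨j, hj⟩ => by omega

theorem extend_val_ne_zero (hv : v ≠ 0) : Function.extend Fin.val v 0 ≠ 0 := fun h =>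
  hv <| funext fun i => by rw [← Fin.val_injective.extend_apply v 0 i, h]; rfl

theorem cast_pathForm_extend_val :
    ((pathForm n (Function.extend Fin.val v 0) : ℤ) : ℝ) = (∑ i, ((v i : ℝ)) ^ 2)
      - ∑ i : Fin n, if h : (i : ℕ) + 1 < n then (v i : ℝ) * (v ⟨(i : ℕ) + 1, h⟩ : ℝ) else 0 := by
  rw [pathForm, ← Fin.sum_univ_eq_sum_range, ← sum_sub_distrib]
  push_cast
  refine sum_congr rfl fun i _ => ?_
  rw [Fin.val_injective.extend_apply v 0 i]
  split_ifs with h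
  · rw [extend_val_of_lt v h, sq]
  · rw [extend_val_of_le v (not_lt.mp h)]; simp

theorem extend_val_eq_intervalIndicator_iff (p q : Fin n) (ε : ℤ) :
    Function.extend Fin.val v 0 = intervalIndicator p q ε ↔
      v = fun i => if p ≤ i ∧ i ≤ q then ε else 0 := by
  constructor
  · intro h
    funext i
    have := congrFun h i
    rw [Fin.val_injective.extend_apply] at this
    rw [this, intervalIndicator]
    simp only [Fin.le_def]
  · rintro rfl
    funext i
    by_cases hi : i < n
    · rw [extend_val_of_lt _ hi, intervalIndicator]
      simp only [Fin.le_def]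
    · rw [extend_val_of_le _ (not_lt.mp hi), intervalIndicator, if_neg (by omega)]

theorem cast_faultedForm_extend_val_div {k : ℕ} (hk : 0 < k) (hkn : k < n) :
    ((faultedForm n k (Function.extend Fin.val v 0) : ℤ) : ℝ) / k = (∑ i, ((v i : ℝ)) ^ 2)
      - (∑ i : Fin n, if h : (i : ℕ) + 1 < n then (v i : ℝ) * (v ⟨(i : ℕ) + 1, h⟩ : ℝ) else 0)
      + (1 / (k : ℝ)) * (v ⟨n - k - 1, by omega⟩ : ℝ) * (v ⟨n - 1, by omega⟩ : ℝ) := by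
  rw [← cast_pathForm_extend_val, faultedForm, extend_val_of_lt v (by omega : n - k - 1 < n),
    extend_val_of_lt v (by omega : n - 1 < n)]
  push_cast
  field_simp

theorem exists_extend_val_eq_intervalIndicator_iff {k : ℕ} (hk : 0 < k) :
    (∃ p q ε, p ≤ q ∧ q < n ∧ (q < n - 1 ∨ n - k ≤ p) ∧ (ε = 1 ∨ ε = -1) ∧
        Function.extend Fin.val v 0 = intervalIndicator p q ε) ↔
      ∃ p q : Fin n, p ≤ q ∧ ((q : ℕ) ≤ n - 2 ∨ ((q : ℕ) = n - 1 ∧ n - k ≤ (p : ℕ))) ∧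
        ((v = fun i => if p ≤ i ∧ i ≤ q then 1 else 0) ∨
         (v = fun i => if p ≤ i ∧ i ≤ q then -1 else 0)) := by
  constructor
  · rintro ⟨p, q, ε, hpq, hqn, hfault, hε, hvε⟩
    have hp : p < n := by omega
    replace hvε := (extend_val_eq_intervalIndicator_iff v ⟨p, hp⟩ ⟨q, hqn⟩ ε).mp hvε
    refine ⟨⟨p, hp⟩, ⟨q, hqn⟩, hpq, by simp only; omega, ?_⟩
    rcases hε with rfl | rfl
    exacts [Or.inl hvε, Or.inr hvε]
  · rintro ⟨p, q, hpq, hfault, hv | hv⟩ <;> rw [← extend_val_eq_intervalIndicator_iff] at hv <;>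
      have := q.isLt
    exacts [⟨p, q, 1, hpq, q.isLt, by omega, Or.inl rfl, hv⟩,
      ⟨p, q, -1, hpq, q.isLt, by omega, Or.inr rfl, hv⟩]

end ZeroExtension

end FaultedLadder

open FaultedLadder

/-- For `n ≥ 3` and `2 ≤ k ≤ n − 1`, the faulted quadratic form
`q(v) = Σ vᵢ² − Σ vᵢ v_{i+1} + (1/k) v_{n−k} vₙ` satisfies `q(v) ≥ 1` for every nonzero
integer vector `v`, with equality iff `v` or `−v` belongs to the faulted ladder set
`X_{n,k}` (interval indicators `χ_{[p,q]}` with `q ≤ n−1`, or `χ_{[p,n]}` with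
`p > n − k`; here indices inside `Fin n` are `0`-based). -/
theorem stmt14 (n k : ℕ) (hk2 : 2 ≤ k) (hkn : k ≤ n - 1)
    (v : Fin n → ℤ) (hv : v ≠ 0) :
    1 ≤ (∑ i, ((v i : ℝ)) ^ 2)
        - (∑ i : Fin n, if h : (i : ℕ) + 1 < n then (v i : ℝ) * (v ⟨(i : ℕ) + 1, h⟩ : ℝ) else 0)
        + (1 / (k : ℝ)) * (v ⟨n - k - 1, by omega⟩ : ℝ) * (v ⟨n - 1, by omega⟩ : ℝ) ∧
    ((∑ i, ((v i : ℝ)) ^ 2)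
        - (∑ i : Fin n, if h : (i : ℕ) + 1 < n then (v i : ℝ) * (v ⟨(i : ℕ) + 1, h⟩ : ℝ) else 0)
        + (1 / (k : ℝ)) * (v ⟨n - k - 1, by omega⟩ : ℝ) * (v ⟨n - 1, by omega⟩ : ℝ) = 1 ↔
      ∃ p q : Fin n, p ≤ q ∧
        ((q : ℕ) ≤ n - 2 ∨ ((q : ℕ) = n - 1 ∧ n - k ≤ (p : ℕ))) ∧
        ((v = fun i => if p ≤ i ∧ i ≤ q then 1 else 0) ∨
         (v = fun i => if p ≤ i ∧ i ≤ q then -1 else 0))) := by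
  have hk : 0 < k := by omega
  have hkn' : k < n := by omega
  have hw : ∀ i, n ≤ i → Function.extend Fin.val v 0 i = 0 := fun _ => extend_val_of_le v
  have hk' : (0 : ℝ) < k := by exact_mod_cast hk
  rw [← cast_faultedForm_extend_val_div v hk hkn', le_div_iff₀ hk', one_mul,
    div_eq_one_iff_eq hk'.ne', ← exists_extend_val_eq_intervalIndicator_iff v hk]
  norm_cast
  exact ⟨le_faultedForm hkn' hw (extend_val_ne_zero v hv), faultedForm_eq_iff hk hkn' hw⟩
end

section
/- Let Q be an n×n real symmetric positive definite matrix with Q₁₁ = 1 and v Q vᵀ ≥ 1 for every nonzero row vector v ∈ ℤⁿ. If the set {v ∈ ℤⁿ : v Q vᵀ = 1} spans a proper linear subspace of ℝⁿ, then Q does not minimize the determinant among such matrices: there exists an n×n real symmetric positive definite matrix Q' with Q'₁₁ = 1, v Q' vᵀ ≥ 1 for every nonzero v ∈ ℤⁿ, and det Q' < det Q. -/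
open Matrix

/-!
Let `w ≠ 0` be orthogonal to every minimal vector; as `e₁` is minimal, `w₁ = 0`. Put
`Q' = Q - t w wᵀ` with `t > 0`. Minimal vectors keep norm `1`, the entry `Q₁₁` is unchanged and
`det Q' = det Q (1 - t wᵀ Q⁻¹ w) < det Q`. By Cauchy–Schwarz for the inner product of `Q`,
`(x ⬝ w)² ≤ (xᵀ Q x)(wᵀ Q⁻¹ w)`, so `Q' ≥ (1 - t wᵀ Q⁻¹ w) Q`. Only finitely many integer vectors
have `vᵀ Q v ≤ 2` (the same inequality with `w = eᵢ` bounds their coordinates), so the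
non-minimal ones satisfy `vᵀ Q v ≥ b` for some `b > 1`, and they stay of norm `≥ 1` once
`1 - t wᵀ Q⁻¹ w = b⁻¹`.
-/

/-- The quadratic form `v Q vᵀ` of a real matrix evaluated at an integer vector. -/
noncomputable def intQuadForm {n : ℕ} (Q : Matrix (Fin n) (Fin n) ℝ) (v : Fin n → ℤ) : ℝ :=
  dotProduct (fun i => (v i : ℝ)) (Q.mulVec fun i => (v i : ℝ))

section RankOnePerturbation

variable {ι : Type*} [Fintype ι]

theorem Matrix.PosSemidef.sq_dotProduct_mulVec_le {Q : Matrix ι ι ℝ} (hQ : Q.PosSemidef)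
    (x y : ι → ℝ) : (x ⬝ᵥ Q *ᵥ y) ^ 2 ≤ (x ⬝ᵥ Q *ᵥ x) * (y ⬝ᵥ Q *ᵥ y) := by
  let _ := Q.toSeminormedAddCommGroup hQ
  let _ := Q.toInnerProductSpace hQ
  have inner_eq (u v : ι → ℝ) : (inner ℝ u v : ℝ) = u ⬝ᵥ Q *ᵥ v := by
    change (Q *ᵥ v) ⬝ᵥ star u = _
    simp [dotProduct_comm]
  simpa only [inner_eq, sq] using real_inner_mul_inner_self_le x y

theorem dotProduct_sub_smul_vecMulVec_mulVec (Q : Matrix ι ι ℝ) (t : ℝ) (w x : ι → ℝ) :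
    x ⬝ᵥ (Q - t • vecMulVec w w) *ᵥ x = x ⬝ᵥ Q *ᵥ x - t * (x ⬝ᵥ w) ^ 2 := by
  rw [sub_mulVec, dotProduct_sub, smul_mulVec, dotProduct_smul, vecMulVec_mulVec,
    op_smul_eq_smul, dotProduct_smul, smul_eq_mul, smul_eq_mul, dotProduct_comm w x]
  ring

variable [DecidableEq ι]

theorem Matrix.PosDef.sq_dotProduct_le {Q : Matrix ι ι ℝ} (hQ : Q.PosDef) (x w : ι → ℝ) :
    (x ⬝ᵥ w) ^ 2 ≤ (x ⬝ᵥ Q *ᵥ x) * (w ⬝ᵥ Q⁻¹ *ᵥ w) := by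
  have hQQ : Q * Q⁻¹ = 1 := Q.mul_nonsing_inv hQ.det_pos.ne'.isUnit
  have h := hQ.posSemidef.sq_dotProduct_mulVec_le x (Q⁻¹ *ᵥ w)
  rwa [mulVec_mulVec, hQQ, one_mulVec, dotProduct_comm (Q⁻¹ *ᵥ w)] at h

theorem Matrix.PosDef.mul_dotProduct_mulVec_le_sub_smul_vecMulVec {Q : Matrix ι ι ℝ}
    (hQ : Q.PosDef) {t : ℝ} (ht : 0 ≤ t) (w x : ι → ℝ) :
    (1 - t * (w ⬝ᵥ Q⁻¹ *ᵥ w)) * (x ⬝ᵥ Q *ᵥ x) ≤ x ⬝ᵥ (Q - t • vecMulVec w w) *ᵥ x := by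
  rw [dotProduct_sub_smul_vecMulVec_mulVec]
  nlinarith [mul_le_mul_of_nonneg_left (hQ.sq_dotProduct_le x w) ht]

theorem Matrix.PosDef.sub_smul_vecMulVec {Q : Matrix ι ι ℝ} (hQ : Q.PosDef) {t : ℝ}
    (ht : 0 ≤ t) (w : ι → ℝ) (htw : t * (w ⬝ᵥ Q⁻¹ *ᵥ w) < 1) :
    (Q - t • vecMulVec w w).PosDef := by
  refine .of_dotProduct_mulVec_pos ?_ fun x hx => ?_
  · simpa using hQ.isHermitian.sub ((posSemidef_vecMulVec_self_star w).isHermitian.smul (.all t))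
  · have hx' : 0 < x ⬝ᵥ Q *ᵥ x := by simpa using hQ.dotProduct_mulVec_pos hx
    simpa using (mul_pos (sub_pos.2 htw) hx').trans_le
      (hQ.mul_dotProduct_mulVec_le_sub_smul_vecMulVec ht w x)

theorem Matrix.PosDef.det_sub_smul_vecMulVec {Q : Matrix ι ι ℝ} (hQ : Q.PosDef) (t : ℝ)
    (w : ι → ℝ) : (Q - t • vecMulVec w w).det = Q.det * (1 - t * (w ⬝ᵥ Q⁻¹ *ᵥ w)) := by
  rw [sub_eq_add_neg, ← neg_smul, ← smul_vecMulVec, vecMulVec_eq Unit,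
    det_add_replicateCol_mul_replicateRow hQ.det_pos.ne'.isUnit, det_unique (n := Unit),
    add_apply, one_apply_eq, Matrix.mul_assoc, ← replicateCol_mulVec,
    replicateRow_mul_replicateCol_apply, mulVec_smul, dotProduct_smul, smul_eq_mul]
  ring

end RankOnePerturbation

theorem exists_gt_forall_le_of_finite_setOf_le {α : Type*} {f : α → ℝ} {a b : ℝ} (hab : a < b)
    (hfin : {x | f x ≤ b}.Finite) : ∃ c, a < c ∧ ∀ x, a < f x → c ≤ f x := by
  set s := {x | a < f x ∧ f x ≤ b}
  rcases s.eq_empty_or_nonempty with hs | hs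
  · refine ⟨b, hab, fun x hx => not_lt.1 fun hxb => ?_⟩
    exact hs.subset ⟨hx, hxb.le⟩
  · obtain ⟨x₀, ⟨hx₀, hx₀b⟩, hmin⟩ :=
      s.exists_min_image f (hfin.subset fun x hx => hx.2) hs
    refine ⟨f x₀, hx₀, fun x hx => ?_⟩
    rcases le_or_gt (f x) b with hxb | hxb
    · exact hmin x ⟨hx, hxb⟩
    · linarith

theorem Int.finite_setOf_sq_le (C : ℝ) : {k : ℤ | (k : ℝ) ^ 2 ≤ C}.Finite := by
  refine (Set.finite_Icc (-⌈C⌉) ⌈C⌉).subset fun k hk => ?_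
  have habs : ((|k| : ℤ) : ℝ) ≤ C := by
    have := Int.natAbs_le_self_sq k
    rw [Int.natCast_natAbs] at this
    exact le_trans (by exact_mod_cast this) hk
  exact abs_le.1 (Int.cast_le.1 (habs.trans (Int.le_ceil C)))

theorem Matrix.PosDef.finite_setOf_intQuadForm_le {n : ℕ} {Q : Matrix (Fin n) (Fin n) ℝ}
    (hQ : Q.PosDef) (R : ℝ) : {v : Fin n → ℤ | intQuadForm Q v ≤ R}.Finite := by
  classical
  let e (i : Fin n) : Fin n → ℝ := Pi.single i 1
  refine (Set.Finite.pi (t := fun i => {k : ℤ | (k : ℝ) ^ 2 ≤ R * (e i ⬝ᵥ Q⁻¹ *ᵥ e i)})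
    fun i => Int.finite_setOf_sq_le _).subset fun v hv i _ => ?_
  have hcoord := hQ.sq_dotProduct_le (fun j => (v j : ℝ)) (e i)
  have hinv : 0 ≤ e i ⬝ᵥ Q⁻¹ *ᵥ e i := by
    simpa using hQ.inv.posSemidef.dotProduct_mulVec_nonneg (e i)
  simp only [e, dotProduct_single, mul_one] at hcoord
  exact hcoord.trans (mul_le_mul_of_nonneg_right hv hinv)

theorem intQuadForm_single {n : ℕ} (Q : Matrix (Fin n) (Fin n) ℝ) (i : Fin n) :
    intQuadForm Q (Pi.single i 1) = Q i i := by
  simp [intQuadForm, Pi.single_apply, dotProduct, mulVec]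

theorem Submodule.exists_ne_zero_forall_dotProduct_eq_zero {K ι : Type*} [Field K] [Fintype ι]
    [DecidableEq ι] {p : Submodule K (ι → K)} (hp : p ≠ ⊤) :
    ∃ w ≠ 0, ∀ x ∈ p, x ⬝ᵥ w = 0 := by
  obtain ⟨f, hf0, hfp⟩ := p.exists_dual_map_eq_bot_of_lt_top hp.lt_top inferInstance
  let w : ι → K := fun i => f fun j => if i = j then 1 else 0
  have hfw (x : ι → K) : f x = x ⬝ᵥ w := by
    rw [f.pi_apply_eq_sum_univ]
    rfl
  refine ⟨w, fun hw => hf0 (LinearMap.ext fun x => by simp [hfw, hw]), fun x hx => ?_⟩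
  rw [← hfw, ← Submodule.mem_bot K, ← hfp]
  exact Submodule.mem_map_of_mem hx

theorem stmt15_general (n : ℕ) (hn : 0 < n) (Q : Matrix (Fin n) (Fin n) ℝ)
    (hpd : Q.PosDef)
    (h11 : Q ⟨0, hn⟩ ⟨0, hn⟩ = 1)
    (hge : ∀ v : Fin n → ℤ, v ≠ 0 → 1 ≤ intQuadForm Q v)
    (hspan : Submodule.span ℝ
        ((fun v : Fin n → ℤ => fun i => (v i : ℝ)) ''
          {v : Fin n → ℤ | intQuadForm Q v = 1}) ≠ ⊤) :
    ∃ Q' : Matrix (Fin n) (Fin n) ℝ, Q'.IsSymm ∧ Q'.PosDef ∧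
      Q' ⟨0, hn⟩ ⟨0, hn⟩ = 1 ∧
      (∀ v : Fin n → ℤ, v ≠ 0 → 1 ≤ intQuadForm Q' v) ∧
      Q'.det < Q.det := by
  classical
  obtain ⟨w, hw0, hw⟩ := Submodule.exists_ne_zero_forall_dotProduct_eq_zero hspan
  have horth (v : Fin n → ℤ) (hv : intQuadForm Q v = 1) : (fun i => (v i : ℝ)) ⬝ᵥ w = 0 :=
    hw _ (Submodule.subset_span ⟨v, hv, rfl⟩)
  have hw₀ : w ⟨0, hn⟩ = 0 := by
    simpa [Pi.single_apply, dotProduct] using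
      horth (Pi.single ⟨0, hn⟩ 1) ((intQuadForm_single Q _).trans h11)
  obtain ⟨b, hb, hgap⟩ :=
    exists_gt_forall_le_of_finite_setOf_le one_lt_two (hpd.finite_setOf_intQuadForm_le 2)
  have hp : 0 < w ⬝ᵥ Q⁻¹ *ᵥ w := by simpa using hpd.inv.dotProduct_mulVec_pos hw0
  -- `t` is chosen so that `Q' ≥ Q / b` as quadratic forms and `det Q' = det Q / b`.
  set t := (1 - b⁻¹) / (w ⬝ᵥ Q⁻¹ *ᵥ w)
  have ht : 0 ≤ t := div_nonneg (sub_nonneg.2 (inv_le_one_of_one_le₀ hb.le)) hp.le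
  have htp : 1 - t * (w ⬝ᵥ Q⁻¹ *ᵥ w) = b⁻¹ := by rw [div_mul_cancel₀ _ hp.ne']; ring
  have hQ'pd := hpd.sub_smul_vecMulVec ht w (by linarith [inv_pos.2 (zero_lt_one.trans hb)])
  refine ⟨_, by simpa using hQ'pd.isHermitian, hQ'pd, by simp [vecMulVec_apply, hw₀, h11],
    fun v hv => ?_, ?_⟩
  · rcases (hge v hv).eq_or_lt with h1 | h1
    · rw [intQuadForm, dotProduct_sub_smul_vecMulVec_mulVec, ← intQuadForm, ← h1, horth v h1.symm]
      simp
    · have := hpd.mul_dotProduct_mulVec_le_sub_smul_vecMulVec ht w (fun i => (v i : ℝ))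
      rw [htp] at this
      calc (1 : ℝ) = b⁻¹ * b := (inv_mul_cancel₀ (by linarith)).symm
        _ ≤ b⁻¹ * intQuadForm Q v := by gcongr; exact hgap v h1
        _ ≤ intQuadForm (Q - t • vecMulVec w w) v := this
  · rw [hpd.det_sub_smul_vecMulVec, htp]
    exact mul_lt_of_lt_one_right hpd.det_pos (inv_lt_one_of_one_lt₀ hb)

/-- If `Q ∈ Ω₁` (symmetric positive definite, `Q₁₁ = 1`, and `v Q vᵀ ≥ 1` for all
nonzero integer vectors) is such that the integer vectors with `v Q vᵀ = 1` span a
proper subspace of `ℝⁿ`, then `Q` does not minimize the determinant on `Ω₁`. -/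
theorem stmt15 (n : ℕ) (hn : 0 < n) (Q : Matrix (Fin n) (Fin n) ℝ)
    (hsymm : Q.IsSymm) (hpd : Q.PosDef)
    (h11 : Q ⟨0, hn⟩ ⟨0, hn⟩ = 1)
    (hge : ∀ v : Fin n → ℤ, v ≠ 0 → 1 ≤ intQuadForm Q v)
    (hspan : Submodule.span ℝ
        ((fun v : Fin n → ℤ => fun i => (v i : ℝ)) ''
          {v : Fin n → ℤ | intQuadForm Q v = 1}) ≠ ⊤) :
    ∃ Q' : Matrix (Fin n) (Fin n) ℝ, Q'.IsSymm ∧ Q'.PosDef ∧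
      Q' ⟨0, hn⟩ ⟨0, hn⟩ = 1 ∧
      (∀ v : Fin n → ℤ, v ≠ 0 → 1 ≤ intQuadForm Q' v) ∧
      Q'.det < Q.det :=
  stmt15_general n hn Q hpd h11 hge hspan
end

section
/- For every positive integer n, the set Ω₂ of all n×n real symmetric positive definite matrices Q with Qᵢᵢ = 1 for every i and v Q vᵀ ≥ 1 for every nonzero row vector v ∈ ℤⁿ is a convex and compact subset of the space of n×n real symmetric matrices. -/
open Matrix

/-- The set `Ω₂` of symmetric positive definite matrices with unit diagonal whose
associated quadratic form is `≥ 1` on all nonzero integer vectors. -/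
def Omega2 (n : ℕ) : Set (Matrix (Fin n) (Fin n) ℝ) :=
  {Q | Q.IsSymm ∧ Q.PosDef ∧ (∀ i, Q i i = 1) ∧
    ∀ v : Fin n → ℤ, v ≠ 0 → 1 ≤ intQuadForm Q v}

/-!
If `Q` is positive semidefinite with `Q *ᵥ x = 0` for some real `x ≠ 0`, simultaneous Dirichlet
approximation gives `q ≠ 0` and an integer vector `v` with `v - q • x` arbitrarily small, and
`v ≠ 0` once it is smaller than `x`. Since `x` is in the kernel, `vQv = (v - q • x) Q (v - q • x)`,
which is then `< 1`. Hence on `Ω₂` positive definiteness follows from semidefiniteness, and `Ω₂` is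
the intersection of the closed convex cone of positive semidefinite matrices with the affine
subspace `diag Q = 1` and the closed half-spaces `1 ≤ vQv`. The entries of a positive semidefinite
matrix with unit diagonal lie in `[-1, 1]`, so `Ω₂` is also bounded.
-/

theorem exists_int_ne_zero_forall_abs_mul_sub_lt {ι : Type*} [Finite ι] (x : ι → ℝ) {ε : ℝ}
    (hε : 0 < ε) : ∃ q : ℤ, q ≠ 0 ∧ ∃ v : ι → ℤ, ∀ i, |q * x i - v i| < ε := by
  obtain ⟨N, hN⟩ := exists_nat_one_div_lt hε
  have hN₀ : (0 : ℝ) < N + 1 := by positivity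
  set box : ℕ → ι → ℤ := fun m i => ⌊Int.fract (m * x i) * (N + 1)⌋
  have hbox : Set.MapsTo box Set.univ (Set.univ.pi fun _ => Set.Ico 0 (N + 1)) := by
    intro m _ i _
    refine ⟨Int.floor_nonneg.2 (by positivity), Int.floor_lt.2 ?_⟩
    push_cast
    exact mul_lt_of_lt_one_left hN₀ (Int.fract_lt_one _)
  obtain ⟨a, -, b, -, hab, hbox_eq⟩ := Set.infinite_univ.exists_ne_map_eq_of_mapsTo hbox
    (Set.Finite.pi fun _ => Set.finite_Ico _ _)
  refine ⟨a - b, by omega, fun i => ⌊a * x i⌋ - ⌊b * x i⌋, fun i => ?_⟩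
  have hclose := Int.abs_sub_lt_one_of_floor_eq_floor (congrFun hbox_eq i)
  calc |((a - b : ℤ) : ℝ) * x i - ((⌊a * x i⌋ - ⌊b * x i⌋ : ℤ) : ℝ)|
      = |Int.fract (a * x i) * (N + 1) - Int.fract (b * x i) * (N + 1)| / (N + 1) := by
        rw [← sub_mul, abs_mul, abs_of_pos hN₀, mul_div_cancel_right₀ _ hN₀.ne', Int.fract,
          Int.fract]
        push_cast
        ring_nf
    _ < 1 / (N + 1) := div_lt_div_of_pos_right hclose hN₀
    _ < ε := hN

section

variable {ι : Type*} [Fintype ι]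

theorem Matrix.abs_dotProduct_mulVec_le (Q : Matrix ι ι ℝ) {d : ι → ℝ} {ε : ℝ}
    (hd : ∀ i, |d i| ≤ ε) : |d ⬝ᵥ Q *ᵥ d| ≤ (∑ i, ∑ j, |Q i j|) * ε ^ 2 := by
  calc |d ⬝ᵥ Q *ᵥ d| = |∑ i, ∑ j, d i * Q i j * d j| := by
        simp only [dotProduct, mulVec, Finset.mul_sum, mul_assoc]
    _ ≤ ∑ i, ∑ j, |d i * Q i j * d j| :=
        (Finset.abs_sum_le_sum_abs _ _).trans (Finset.sum_le_sum fun i _ =>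
          Finset.abs_sum_le_sum_abs _ _)
    _ ≤ ∑ i, ∑ j, |Q i j| * ε ^ 2 := by
        gcongr with i _ j _
        have hdd : |d i| * |d j| ≤ ε ^ 2 :=
          sq ε ▸ mul_le_mul (hd i) (hd j) (abs_nonneg _) ((abs_nonneg _).trans (hd i))
        rw [abs_mul, abs_mul, mul_right_comm, mul_comm]
        exact mul_le_mul_of_nonneg_left hdd (abs_nonneg _)
    _ = (∑ i, ∑ j, |Q i j|) * ε ^ 2 := by simp only [Finset.sum_mul]

theorem Matrix.IsSymm.dotProduct_mulVec_add_smul {Q : Matrix ι ι ℝ} (hQ : Q.IsSymm) {x : ι → ℝ}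
    (hx : Q *ᵥ x = 0) (d : ι → ℝ) (t : ℝ) :
    (d + t • x) ⬝ᵥ Q *ᵥ (d + t • x) = d ⬝ᵥ Q *ᵥ d := by
  have hxQ : x ⬝ᵥ Q *ᵥ d = 0 := by
    rw [dotProduct_mulVec, ← mulVec_transpose, hQ.eq, hx, zero_dotProduct]
  rw [mulVec_add, mulVec_smul, hx, smul_zero, add_zero, add_dotProduct, smul_dotProduct, hxQ,
    smul_zero, add_zero]

theorem Matrix.PosSemidef.two_mul_abs_apply_le {Q : Matrix ι ι ℝ} (hQ : Q.PosSemidef) (i j : ι) :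
    2 * |Q i j| ≤ Q i i + Q j j := by
  classical
  have hsymm : Q j i = Q i j := by simpa using hQ.isHermitian.apply i j
  have hplus := hQ.dotProduct_mulVec_nonneg (Pi.single i 1 + Pi.single j 1)
  have hminus := hQ.dotProduct_mulVec_nonneg (Pi.single i 1 - Pi.single j 1)
  simp only [star_trivial, add_dotProduct, sub_dotProduct, mulVec_add, mulVec_sub,
    dotProduct_add, dotProduct_sub, mulVec_single, single_dotProduct, one_mul, mul_one,
    Pi.smul_apply, op_smul_eq_mul, col_apply] at hplus hminus
  rw [hsymm] at hplus hminus
  rcases abs_choice (Q i j) with h | h <;> linarith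

theorem Matrix.PosSemidef.posDef_of_forall_int {Q : Matrix ι ι ℝ} (hQ : Q.PosSemidef) {c : ℝ}
    (hc : 0 < c)
    (hint : ∀ v : ι → ℤ, v ≠ 0 → c ≤ (fun i => (v i : ℝ)) ⬝ᵥ Q *ᵥ fun i => (v i : ℝ)) :
    Q.PosDef := by
  refine PosDef.of_dotProduct_mulVec_pos hQ.1 fun x hx => ?_
  refine (hQ.dotProduct_mulVec_nonneg x).lt_of_ne' fun hx₀ => ?_
  have hker : Q *ᵥ x = 0 := (hQ.dotProduct_mulVec_zero_iff x).1 hx₀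
  obtain ⟨k, hk⟩ : ∃ k, x k ≠ 0 := Function.ne_iff.1 hx
  set S := ∑ i, ∑ j, |Q i j|
  obtain ⟨ε, hε, hεx, hεS⟩ : ∃ ε > 0, ε < |x k| ∧ S * ε ^ 2 < c :=
    ((eventually_lt_nhds (abs_pos.2 hk)).and
      (ContinuousAt.eventually_lt (by fun_prop) (by fun_prop) (by simpa using hc))).exists_gt
  obtain ⟨q, hq, v, hv⟩ := exists_int_ne_zero_forall_abs_mul_sub_lt x hε
  have hv₀ : v ≠ 0 := by
    rintro rfl
    have hqk : |x k| ≤ |(q : ℝ) * x k| := by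
      rw [abs_mul]
      exact le_mul_of_one_le_left (abs_nonneg _) (by exact_mod_cast Int.one_le_abs hq)
    have := hv k
    simp only [Pi.zero_apply, Int.cast_zero, sub_zero] at this
    linarith
  set d : ι → ℝ := fun i => (v i : ℝ) - q * x i
  have hvd : (fun i => (v i : ℝ)) = d + (q : ℝ) • x := by
    ext i
    simp [d]
  have hsmall : |d ⬝ᵥ Q *ᵥ d| < c :=
    (Q.abs_dotProduct_mulVec_le fun i => (abs_sub_comm _ _).trans_le (hv i).le).trans_lt hεS
  have := hint v hv₀
  rw [hvd, (isHermitian_iff_isSymm.1 hQ.1).dotProduct_mulVec_add_smul hker] at this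
  linarith [le_abs_self (d ⬝ᵥ Q *ᵥ d)]

theorem Matrix.isClosed_setOf_posSemidef : IsClosed {Q : Matrix ι ι ℝ | Q.PosSemidef} := by
  have hQ : {Q : Matrix ι ι ℝ | Q.PosSemidef} =
      {Q | Qᴴ = Q} ∩ ⋂ x : ι → ℝ, {Q | 0 ≤ star x ⬝ᵥ Q *ᵥ x} := by
    ext Q
    simp only [Set.mem_ofPred_eq, Set.mem_inter_iff, Set.mem_iInter,
      posSemidef_iff_dotProduct_mulVec]
    rfl
  rw [hQ]
  exact (isClosed_eq (by fun_prop) (by fun_prop)).inter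
    (isClosed_iInter fun x => isClosed_le continuous_const (by fun_prop))

end

theorem Matrix.convex_setOf_posSemidef {ι : Type*} :
    Convex ℝ {Q : Matrix ι ι ℝ | Q.PosSemidef} :=
  fun _ hQ₁ _ hQ₂ _ _ ha hb _ => (hQ₁.smul ha).add (hQ₂.smul hb)

theorem isLinearMap_intQuadForm {n : ℕ} (v : Fin n → ℤ) :
    IsLinearMap ℝ fun Q : Matrix (Fin n) (Fin n) ℝ => intQuadForm Q v where
  map_add Q₁ Q₂ := by simp only [intQuadForm, add_mulVec, dotProduct_add]
  map_smul a Q := by simp only [intQuadForm, smul_mulVec, dotProduct_smul]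

theorem continuous_intQuadForm {n : ℕ} (v : Fin n → ℤ) :
    Continuous fun Q : Matrix (Fin n) (Fin n) ℝ => intQuadForm Q v := by
  unfold intQuadForm
  fun_prop

theorem omega2_eq (n : ℕ) :
    Omega2 n = {Q | Q.PosSemidef} ∩ (⋂ i, {Q | Q i i = 1}) ∩
      ⋂ (v : Fin n → ℤ) (_ : v ≠ 0), {Q | 1 ≤ intQuadForm Q v} := by
  ext Q
  simp only [Omega2, Set.mem_ofPred_eq, Set.mem_inter_iff, Set.mem_iInter]
  refine ⟨fun ⟨_, hQ, hdiag, hint⟩ => ⟨⟨hQ.posSemidef, hdiag⟩, hint⟩,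
    fun ⟨⟨hQ, hdiag⟩, hint⟩ => ⟨isHermitian_iff_isSymm.1 hQ.1, ?_, hdiag, hint⟩⟩
  exact hQ.posDef_of_forall_int one_pos hint

theorem convex_omega2 (n : ℕ) : Convex ℝ (Omega2 n) := by
  rw [omega2_eq]
  have hdiag (i : Fin n) : IsLinearMap ℝ fun Q : Matrix (Fin n) (Fin n) ℝ => Q i i :=
    ⟨fun _ _ => rfl, fun _ _ => rfl⟩
  exact (convex_setOf_posSemidef.inter (convex_iInter fun i => convex_hyperplane (hdiag i) 1)).inter
    (convex_iInter₂ fun v _ => convex_halfSpace_ge (isLinearMap_intQuadForm v) 1)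

theorem isClosed_omega2 (n : ℕ) : IsClosed (Omega2 n) := by
  rw [omega2_eq]
  exact (isClosed_setOf_posSemidef.inter (isClosed_iInter fun i =>
      isClosed_eq (by fun_prop) continuous_const)).inter
    (isClosed_biInter fun v _ => isClosed_le continuous_const (continuous_intQuadForm v))

theorem omega2_subset_pi_Icc (n : ℕ) :
    Omega2 n ⊆ Set.univ.pi fun _ => Set.univ.pi fun _ => Set.Icc (-1) 1 := by
  rintro Q ⟨-, hQ, hdiag, -⟩ i - j -
  have := hQ.posSemidef.two_mul_abs_apply_le i j
  rw [hdiag, hdiag] at this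
  exact abs_le.1 (by linarith)

/-- `Ω₂` is a convex and compact subset of the space of `n × n` real matrices. -/
theorem stmt16 (n : ℕ) : Convex ℝ (Omega2 n) ∧ IsCompact (Omega2 n) :=
  ⟨convex_omega2 n, (isCompact_univ_pi fun _ => isCompact_univ_pi fun _ => isCompact_Icc)
    |>.of_isClosed_subset (isClosed_omega2 n) (omega2_subset_pi_Icc n)⟩
end

section
/- Let n ≤ 4 and let Q be an n×n real symmetric matrix with Qᵢᵢ = 1 for every i such that v Q vᵀ ≥ 1 for every nonzero vector v ∈ {−1, 0, 1}ⁿ. Then Q is positive definite and v Q vᵀ ≥ 1 for every nonzero row vector v ∈ ℤⁿ; consequently, for n ≤ 4 the set Ω₂ coincides with the solution set of this finite system of linear conditions and is a convex polytope. -/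
/-!
Conjugating `Q` by a signed permutation, we may assume `0 ≤ x₀ ≤ x₁ ≤ x₂ ≤ x₃`. Then
`x = ∑ dₖ eₖ` with increments `dₖ ≥ 0` and the nested vectors `e₀ = 1111`, `e₁ = 0111`,
`e₂ = 0011`, `e₃ = 0001`. Write `q v = v Q vᵀ`. For `k < l` split `eₖ - eₗ = a₁ + ⋯ + aₘ` into
unit vectors; then `2 eₖ Q eₗᵀ = ∑ᵢ q (aᵢ + eₗ) - m + (2 - m) q eₗ`. In dimension 4 either
`m ≤ 2` or `eₗ` is a unit vector, so the conditions on `{0, 1}`-vectors give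
`2 eₖ Q eₗᵀ ≥ 2 - m`. Hence `q x` is at least the integral form
`∑ dₖ² + d₀d₁ + d₁d₂ + d₂d₃ - d₀d₃`, and twice this form is a sum of four squares that
vanishes only at `d = 0`. Smaller `n` reduce to `n = 4` by passing to `Q ⊕ I`.
-/

open Matrix

def CubeBounded {n : ℕ} (Q : Matrix (Fin n) (Fin n) ℝ) : Prop :=
  ∀ v : Fin n → ℤ, v ≠ 0 → (∀ i, v i = -1 ∨ v i = 0 ∨ v i = 1) → 1 ≤ intQuadForm Q v

section SignedPermutation

variable {n : ℕ}

def signedConj (Q : Matrix (Fin n) (Fin n) ℝ) (σ : Equiv.Perm (Fin n)) (s : Fin n → ℤ) :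
    Matrix (Fin n) (Fin n) ℝ :=
  Matrix.of fun i j => (s i : ℝ) * s j * Q (σ i) (σ j)

lemma dotProduct_signedConj_mulVec (Q : Matrix (Fin n) (Fin n) ℝ) (σ : Equiv.Perm (Fin n))
    (s : Fin n → ℤ) (y : Fin n → ℝ) :
    y ⬝ᵥ signedConj Q σ s *ᵥ y =
      (fun k => s (σ.symm k) * y (σ.symm k)) ⬝ᵥ Q *ᵥ fun k => s (σ.symm k) * y (σ.symm k) := by
  simp only [dotProduct, mulVec, Finset.mul_sum]
  refine Fintype.sum_equiv σ _ _ fun i => Fintype.sum_equiv σ _ _ fun j => ?_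
  simp only [signedConj, of_apply, Equiv.symm_apply_apply]
  ring

lemma isSymm_signedConj {Q : Matrix (Fin n) (Fin n) ℝ} (hQ : Q.IsSymm) (σ : Equiv.Perm (Fin n))
    (s : Fin n → ℤ) : (signedConj Q σ s).IsSymm :=
  IsSymm.ext fun i j => by simp only [signedConj, of_apply, hQ.apply (σ i) (σ j)]; ring

lemma signedConj_apply_self {Q : Matrix (Fin n) (Fin n) ℝ} (hdiag : ∀ i, Q i i = 1)
    (σ : Equiv.Perm (Fin n)) {s : Fin n → ℤ} (hs : ∀ i, s i = 1 ∨ s i = -1) (i : Fin n) :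
    signedConj Q σ s i i = 1 := by
  rcases hs i with h | h <;> simp [signedConj, hdiag, h]

lemma cubeBounded_signedConj {Q : Matrix (Fin n) (Fin n) ℝ} (hQ : CubeBounded Q)
    (σ : Equiv.Perm (Fin n)) {s : Fin n → ℤ} (hs : ∀ i, s i = 1 ∨ s i = -1) :
    CubeBounded (signedConj Q σ s) := by
  intro w hw hcube
  have hw' : (fun k => s (σ.symm k) * w (σ.symm k)) ≠ 0 := by
    refine fun h => hw (funext fun i => ?_)
    have := congrFun h (σ i)
    simp only [Equiv.symm_apply_apply, Pi.zero_apply] at this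
    rcases hs i with h | h <;> simpa [h] using this
  convert hQ _ hw' fun k => ?_ using 1
  · simp only [intQuadForm, dotProduct_signedConj_mulVec, Int.cast_mul]
  · rcases hs (σ.symm k) with h | h <;> rcases hcube (σ.symm k) with h' | h' | h' <;> simp [h, h']

lemma exists_signedConj_abs_monotone (x : Fin n → ℝ) :
    ∃ (σ : Equiv.Perm (Fin n)) (s : Fin n → ℤ), (∀ i, s i = 1 ∨ s i = -1) ∧
      Monotone (fun k => |x (σ k)|) ∧ ∀ Q : Matrix (Fin n) (Fin n) ℝ,
        (fun k => |x (σ k)|) ⬝ᵥ signedConj Q σ s *ᵥ (fun k => |x (σ k)|) = x ⬝ᵥ Q *ᵥ x := by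
  let σ := Tuple.sort fun i => |x i|
  refine ⟨σ, fun i => if x (σ i) < 0 then -1 else 1, fun i => by dsimp only; split_ifs <;> simp,
    Tuple.monotone_sort (fun i => |x i|), fun Q => ?_⟩
  have hx : (fun k => ((if x (σ (σ.symm k)) < 0 then -1 else 1 : ℤ) : ℝ) * |x (σ (σ.symm k))|)
      = x := by
    funext k
    simp only [Equiv.apply_symm_apply]
    split_ifs with h
    · simp [abs_of_neg h]
    · simp [abs_of_nonneg (not_lt.1 h)]
  rw [dotProduct_signedConj_mulVec, hx]

lemma abs_apply_last_pos {x : Fin (n + 1) → ℝ} (hx : x ≠ 0) {σ : Equiv.Perm (Fin (n + 1))}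
    (hmono : Monotone fun k => |x (σ k)|) : 0 < |x (σ (Fin.last n))| := by
  obtain ⟨i, hi⟩ := Function.ne_iff.1 hx
  calc 0 < |x (σ (σ.symm i))| := by simpa using hi
    _ ≤ |x (σ (Fin.last n))| := hmono (Fin.le_last _)

end SignedPermutation

section ChainForm

variable {R : Type*} [CommRing R]

def chainForm (y : Fin 4 → R) : R :=
  y 0 ^ 2 + (y 1 - y 0) ^ 2 + (y 2 - y 1) ^ 2 + (y 3 - y 2) ^ 2 + y 0 * (y 1 - y 0)
    + (y 1 - y 0) * (y 2 - y 1) + (y 2 - y 1) * (y 3 - y 2) - y 0 * (y 3 - y 2)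

lemma two_mul_chainForm (y : Fin 4 → R) :
    2 * chainForm y = y 1 ^ 2 + (y 2 - y 0) ^ 2 + (y 3 - y 1) ^ 2 + (y 3 - y 2 - y 0) ^ 2 := by
  unfold chainForm; ring

lemma chainForm_pos [LinearOrder R] [IsStrictOrderedRing R] {y : Fin 4 → R} (hy : y 3 ≠ 0) :
    0 < chainForm y := by
  refine pos_of_mul_pos_right (a := 2) ?_ zero_le_two
  rw [two_mul_chainForm]
  by_contra! hle
  have h₁ : y 1 = 0 := by
    nlinarith [sq_nonneg (y 1), sq_nonneg (y 2 - y 0), sq_nonneg (y 3 - y 1),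
      sq_nonneg (y 3 - y 2 - y 0)]
  have h₃ : y 3 - y 1 = 0 := by
    nlinarith [sq_nonneg (y 1), sq_nonneg (y 2 - y 0), sq_nonneg (y 3 - y 1),
      sq_nonneg (y 3 - y 2 - y 0)]
  exact hy (by linear_combination h₁ + h₃)

lemma Int.cast_chainForm (y : Fin 4 → ℤ) :
    ((chainForm y : ℤ) : ℝ) = chainForm fun k => (y k : ℝ) := by
  simp [chainForm]

end ChainForm

section DimensionFour

variable {Q : Matrix (Fin 4) (Fin 4) ℝ}

lemma dotProduct_mulVec_four (hQ : Q.IsSymm) (hdiag : ∀ i, Q i i = 1) (x : Fin 4 → ℝ) :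
    x ⬝ᵥ Q *ᵥ x = x 0 ^ 2 + x 1 ^ 2 + x 2 ^ 2 + x 3 ^ 2 + 2 * (Q 0 1 * x 0 * x 1 +
      Q 0 2 * x 0 * x 2 + Q 0 3 * x 0 * x 3 + Q 1 2 * x 1 * x 2 + Q 1 3 * x 1 * x 3 +
      Q 2 3 * x 2 * x 3) := by
  simp only [dotProduct, mulVec, Fin.sum_univ_four, hdiag, hQ.apply 0 1, hQ.apply 0 2,
    hQ.apply 0 3, hQ.apply 1 2, hQ.apply 1 3, hQ.apply 2 3]
  ring

lemma chainForm_le_dotProduct_mulVec (hQ : Q.IsSymm) (hdiag : ∀ i, Q i i = 1)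
    (hcube : CubeBounded Q) {x : Fin 4 → ℝ} (hx₀ : 0 ≤ x 0) (hx : Monotone x) :
    chainForm x ≤ x ⬝ᵥ Q *ᵥ x := by
  have c1111 := hcube ![1, 1, 1, 1] (by decide) (by decide)
  have c0111 := hcube ![0, 1, 1, 1] (by decide) (by decide)
  have c0011 := hcube ![0, 0, 1, 1] (by decide) (by decide)
  have c1011 := hcube ![1, 0, 1, 1] (by decide) (by decide)
  have c0101 := hcube ![0, 1, 0, 1] (by decide) (by decide)
  have c1001 := hcube ![1, 0, 0, 1] (by decide) (by decide)
  simp only [intQuadForm, dotProduct_mulVec_four hQ hdiag, Fin.isValue, cons_val_zero,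
    Int.cast_one, one_pow, cons_val_one, cons_val, mul_one, Int.cast_zero, ne_eq,
    OfNat.ofNat_ne_zero, not_false_eq_true, zero_pow, zero_add, mul_zero, add_zero]
    at c1111 c0111 c0011 c1011 c0101 c1001
  have term : ∀ {u v c : ℝ}, 0 ≤ u → 0 ≤ v → 1 ≤ c → 0 ≤ u * v * (c - 1) :=
    fun hu hv hc => mul_nonneg (mul_nonneg hu hv) (sub_nonneg.2 hc)
  have d₁ : 0 ≤ x 1 - x 0 := sub_nonneg.2 (hx (by decide))
  have d₂ : 0 ≤ x 2 - x 1 := sub_nonneg.2 (hx (by decide))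
  have d₃ : 0 ≤ x 3 - x 2 := sub_nonneg.2 (hx (by decide))
  rw [dotProduct_mulVec_four hQ hdiag, chainForm]
  -- `x Q xᵀ - chainForm x` is exactly the sum of these terms: the bounds on `2 eₖ Q eₗᵀ`.
  linarith [term hx₀ hx₀ c1111, term d₁ d₁ c0111, term d₂ d₂ c0011, term hx₀ d₁ c1111,
    term hx₀ d₁ c0111, term d₁ d₂ c0111, term d₁ d₂ c0011, term d₂ d₃ c0011, term hx₀ d₂ c1011,
    term hx₀ d₂ c0111, term d₁ d₃ c0101, term d₁ d₃ c0011, term hx₀ d₃ c1001, term hx₀ d₃ c0101,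
    term hx₀ d₃ c0011]

lemma exists_chainForm_abs_le (hQ : Q.IsSymm) (hdiag : ∀ i, Q i i = 1) (hcube : CubeBounded Q)
    (x : Fin 4 → ℝ) : ∃ σ : Equiv.Perm (Fin 4), Monotone (fun k => |x (σ k)|) ∧
      chainForm (fun k => |x (σ k)|) ≤ x ⬝ᵥ Q *ᵥ x := by
  obtain ⟨σ, s, hs, hmono, hconj⟩ := exists_signedConj_abs_monotone x
  refine ⟨σ, hmono, hconj Q ▸ ?_⟩
  exact chainForm_le_dotProduct_mulVec (isSymm_signedConj hQ σ s)
    (signedConj_apply_self hdiag σ hs) (cubeBounded_signedConj hcube σ hs) (abs_nonneg _) hmono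

theorem posDef_and_one_le_intQuadForm_four (hQ : Q.IsSymm) (hdiag : ∀ i, Q i i = 1)
    (hcube : CubeBounded Q) : Q.PosDef ∧ ∀ v : Fin 4 → ℤ, v ≠ 0 → 1 ≤ intQuadForm Q v := by
  refine ⟨PosDef.of_dotProduct_mulVec_pos (isHermitian_iff_isSymm.2 hQ) fun x hx => ?_,
    fun v hv => ?_⟩
  · obtain ⟨σ, hmono, hle⟩ := exists_chainForm_abs_le hQ hdiag hcube x
    simpa using (chainForm_pos (abs_apply_last_pos hx hmono).ne').trans_le hle
  · have hx : (fun i => (v i : ℝ)) ≠ 0 := fun h => hv (funext fun i => by simpa using congrFun h i)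
    obtain ⟨σ, hmono, hle⟩ := exists_chainForm_abs_le hQ hdiag hcube fun i => (v i : ℝ)
    have hlast : |v (σ 3)| ≠ 0 := by
      simpa using (abs_apply_last_pos (n := 3) hx hmono).ne'
    have hchain : (1 : ℤ) ≤ chainForm fun k => |v (σ k)| :=
      chainForm_pos (y := fun k => |v (σ k)|) hlast
    calc (1 : ℝ) ≤ ((chainForm fun k => |v (σ k)| : ℤ) : ℝ) := by exact_mod_cast hchain
      _ = chainForm fun k => |(v (σ k) : ℝ)| := by simp only [Int.cast_chainForm, Int.cast_abs]
      _ ≤ intQuadForm Q v := hle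

end DimensionFour

lemma one_le_dotProduct_self_intCast {ι : Type*} [Fintype ι] {b : ι → ℤ} (hb : b ≠ 0) :
    1 ≤ (fun j => (b j : ℝ)) ⬝ᵥ fun j => (b j : ℝ) := by
  have hpos : 0 < b ⬝ᵥ b :=
    (Finset.sum_nonneg fun j _ => mul_self_nonneg (b j)).lt_of_ne
      (Ne.symm (dotProduct_self_eq_zero.not.2 hb))
  have hcast : ((b ⬝ᵥ b : ℤ) : ℝ) = (fun j => (b j : ℝ)) ⬝ᵥ fun j => (b j : ℝ) := by
    simp [dotProduct]
  rw [← hcast]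
  exact_mod_cast hpos

section Padding

variable {n m : ℕ}

def finSumSubEquiv (h : n ≤ m) : Fin n ⊕ Fin (m - n) ≃ Fin m :=
  finSumFinEquiv.trans (finCongr (Nat.add_sub_of_le h))

noncomputable def padOne (Q : Matrix (Fin n) (Fin n) ℝ) (h : n ≤ m) : Matrix (Fin m) (Fin m) ℝ :=
  reindex (finSumSubEquiv h) (finSumSubEquiv h) (fromBlocks Q 0 0 1)

lemma sumElim_dotProduct_fromBlocks_one_mulVec {ι κ R : Type*} [Fintype ι] [Fintype κ]
    [DecidableEq κ] [CommRing R] (A : Matrix ι ι R) (x : ι → R) (y : κ → R) :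
    Sum.elim x y ⬝ᵥ fromBlocks A 0 0 1 *ᵥ Sum.elim x y = x ⬝ᵥ A *ᵥ x + y ⬝ᵥ y := by
  simp [fromBlocks_mulVec, sumElim_dotProduct_sumElim]

lemma dotProduct_padOne_mulVec (Q : Matrix (Fin n) (Fin n) ℝ) (h : n ≤ m) (u : Fin m → ℝ) :
    u ⬝ᵥ padOne Q h *ᵥ u =
      (u ∘ finSumSubEquiv h ∘ Sum.inl) ⬝ᵥ Q *ᵥ (u ∘ finSumSubEquiv h ∘ Sum.inl)
        + (u ∘ finSumSubEquiv h ∘ Sum.inr) ⬝ᵥ (u ∘ finSumSubEquiv h ∘ Sum.inr) := by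
  rw [padOne, reindex_apply, submatrix_mulVec_equiv, dotProduct_comp_equiv_symm, Equiv.symm_symm,
    ← sumElim_dotProduct_fromBlocks_one_mulVec]
  simp only [← Function.comp_assoc, Sum.elim_comp_inl_inr]

lemma isSymm_padOne {Q : Matrix (Fin n) (Fin n) ℝ} (hQ : Q.IsSymm) (h : n ≤ m) :
    (padOne Q h).IsSymm :=
  (IsSymm.fromBlocks hQ (by simp) isSymm_one).submatrix _

lemma padOne_apply_self {Q : Matrix (Fin n) (Fin n) ℝ} (hdiag : ∀ i, Q i i = 1) (h : n ≤ m)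
    (i : Fin m) : padOne Q h i i = 1 := by
  rw [padOne, reindex_apply, submatrix_apply]
  generalize (finSumSubEquiv h).symm i = j
  rcases j with j | j <;> simp [hdiag]

lemma padOne_submatrix (Q : Matrix (Fin n) (Fin n) ℝ) (h : n ≤ m) :
    (padOne Q h).submatrix (finSumSubEquiv h ∘ Sum.inl) (finSumSubEquiv h ∘ Sum.inl) = Q := by
  ext i j
  simp [padOne]

lemma intQuadForm_padOne (Q : Matrix (Fin n) (Fin n) ℝ) (h : n ≤ m) (v : Fin n → ℤ) :
    intQuadForm (padOne Q h) (Sum.elim v 0 ∘ (finSumSubEquiv h).symm) = intQuadForm Q v := by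
  simp [intQuadForm, dotProduct_padOne_mulVec, Function.comp_def]

lemma cubeBounded_padOne {Q : Matrix (Fin n) (Fin n) ℝ} (hQ : CubeBounded Q) (h : n ≤ m) :
    CubeBounded (padOne Q h) := by
  intro w hw hcube
  rw [intQuadForm, dotProduct_padOne_mulVec]
  set a := w ∘ finSumSubEquiv h ∘ Sum.inl
  set b := w ∘ finSumSubEquiv h ∘ Sum.inr
  change 1 ≤ intQuadForm Q a + (fun j => (b j : ℝ)) ⬝ᵥ fun j => (b j : ℝ)
  by_cases ha : a = 0
  · have hb : b ≠ 0 := by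
      refine fun hb => hw (funext fun i => ?_)
      obtain ⟨j | j, rfl⟩ := (finSumSubEquiv h).surjective i
      exacts [congrFun ha j, congrFun hb j]
    simpa [ha, intQuadForm] using one_le_dotProduct_self_intCast hb
  · have hb : 0 ≤ (fun j => (b j : ℝ)) ⬝ᵥ fun j => (b j : ℝ) :=
      Finset.sum_nonneg fun j _ => mul_self_nonneg _
    linarith [hQ a ha fun i => hcube _]

end Padding

/-- For `n ≤ 4`: if a symmetric matrix `Q` with unit diagonal satisfies `v Q vᵀ ≥ 1` for
every nonzero integer vector with entries in `{−1, 0, 1}`, then `Q` is positive definite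
and `v Q vᵀ ≥ 1` for every nonzero integer vector; hence (for `n ≤ 4`) the set `Ω₂` is
cut out by this finite system of linear conditions. -/
theorem stmt17 (n : ℕ) (hn : n ≤ 4) (Q : Matrix (Fin n) (Fin n) ℝ)
    (hsymm : Q.IsSymm) (hdiag : ∀ i, Q i i = 1)
    (hcube : ∀ v : Fin n → ℤ, v ≠ 0 → (∀ i, v i = -1 ∨ v i = 0 ∨ v i = 1) →
      1 ≤ intQuadForm Q v) :
    Q.PosDef ∧ ∀ v : Fin n → ℤ, v ≠ 0 → 1 ≤ intQuadForm Q v := by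
  obtain ⟨hpos, hint⟩ := posDef_and_one_le_intQuadForm_four (isSymm_padOne hsymm hn)
    (padOne_apply_self hdiag hn) (cubeBounded_padOne hcube hn)
  refine ⟨padOne_submatrix Q hn ▸ hpos.submatrix ((finSumSubEquiv hn).injective.comp
    Sum.inl_injective), fun v hv => ?_⟩
  rw [← intQuadForm_padOne Q hn v]
  refine hint _ fun h => hv (funext fun i => ?_)
  simpa using congrFun h (finSumSubEquiv hn (Sum.inl i))
end
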